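/- arXiv:1901.08171 — 5 statements merged into one kernel-verified Lean document; each statement's English description precedes it below -/
import Mathlib

section
/- If H is a minor of G and the maximum degree of H is at most 3, then G contains a subdivision of H as a subgraph; that is, H is a topological minor of G. -/
open SimpleGraph

/-- `IsMinor H G` : `H` is a minor of `G`, via the branch-set definition: pairwise disjoint
nonempty connected subsets of `V(G)`, one per vertex of `H`, with an edge of `G` between the
sets corresponding to every edge of `H`. -/
def IsMinor {W V : Type} (H : SimpleGraph W) (G : SimpleGraph V) : Prop :=
  ∃ f : W → Set V,
    (∀ i, (f i).Nonempty) ∧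
    (Pairwise fun i j => Disjoint (f i) (f j)) ∧
    (∀ i, (G.induce (f i)).Connected) ∧
    (∀ i j, H.Adj i j → ∃ u ∈ f i, ∃ v ∈ f j, G.Adj u v)

/-- The graph obtained from `H` by subdividing the edge `xy`: the edge `xy` is deleted and the
new vertex `none` is adjacent exactly to `x` and `y`. -/
def SubdivideEdge {V : Type} (H : SimpleGraph V) (x y : V) : SimpleGraph (Option V) :=
  SimpleGraph.fromRel fun a b =>
    (∃ u v : V, a = some u ∧ b = some v ∧ H.Adj u v ∧ s(u, v) ≠ s(x, y)) ∨
    (a = none ∧ (b = some x ∨ b = some y))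

/-- `IsSubdivision G H` : `G` can be obtained from `H` by a finite sequence of edge
subdivisions (up to isomorphism). -/
inductive IsSubdivision : ∀ {V : Type}, SimpleGraph V → ∀ {W : Type}, SimpleGraph W → Prop
  | of_iso {V W : Type} {G : SimpleGraph V} {H : SimpleGraph W} (e : G ≃g H) :
      IsSubdivision G H
  | step {V W : Type} {G : SimpleGraph V} {H : SimpleGraph W} (x y : W) (hxy : H.Adj x y)
      (h : IsSubdivision G (SubdivideEdge H x y)) : IsSubdivision G H

/-- `H` is (isomorphic to) a subgraph of `G`. -/
def IsSubgraphCopy {W V : Type} (H : SimpleGraph W) (G : SimpleGraph V) : Prop :=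
  ∃ f : H →g G, Function.Injective f

/-- `H` is a topological minor of `G`: some subgraph of `G` is a subdivision of `H`. -/
def IsTopologicalMinor {W V : Type} (H : SimpleGraph W) (G : SimpleGraph V) : Prop :=
  ∃ (U : Type) (K : SimpleGraph U), IsSubdivision K H ∧ IsSubgraphCopy K G

/-- The maximum vertex degree `Δ(G)` of a finite graph. -/
noncomputable def maxDeg {V : Type} [Fintype V] (G : SimpleGraph V) : ℕ :=
  Finset.univ.sup fun v => (G.neighborSet v).ncard

/-- `edgeCount G A B` : the number of edges of `G` with one endpoint in `A`
and the other in `B`. -/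
noncomputable def edgeCount {V : Type} (G : SimpleGraph V) (A B : Set V) : ℕ :=
  {e ∈ G.edgeSet | ∃ u ∈ A, ∃ v ∈ B, e = s(u, v)}.ncard

/-- The Petersen graph: `(false, i)` is the outer vertex `uᵢ`, `(true, i)` is the inner
vertex `vᵢ`; edges are `uᵢuᵢ₊₁`, `uᵢvᵢ`, `vᵢvᵢ₊₂` with indices mod 5. -/
def Petersen : SimpleGraph (Bool × ZMod 5) :=
  SimpleGraph.fromRel fun a b =>
    (a.1 = false ∧ b.1 = false ∧ b.2 = a.2 + 1) ∨
    (a.1 = false ∧ b.1 = true ∧ a.2 = b.2) ∨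
    (a.1 = true ∧ b.1 = true ∧ b.2 = a.2 + 2)

/-- `G` is `k`-connected: more than `k` vertices, and deleting any set of fewer than `k`
vertices leaves a connected graph. -/
def KConnected {V : Type} [Fintype V] (k : ℕ) (G : SimpleGraph V) : Prop :=
  k < Fintype.card V ∧ ∀ S : Set V, S.ncard < k → (G.induce Sᶜ).Connected

/-!
Inside each connected branch set of the minor, the at most three attachment points of edges of
`H` are joined to a common centre by paths that meet only at the centre; this is where
`Δ(H) ≤ 3` enters. Leg, edge between branch sets, leg: these paths join the centres of adjacent
branch sets and meet only in centres. Such a model of `H` becomes a subgraph copy of an iterated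
subdivision of `H` by repeatedly subdividing an edge whose path is longer than one edge and
promoting the second vertex of that path to a branch vertex; each step lowers the number of
non-branch path vertices.
-/

open Walk

section SubdivideEdge

variable {W : Type} {H : SimpleGraph W} {x y : W}

theorem subdivideEdge_adj_some_some {u v : W} :
    (SubdivideEdge H x y).Adj (some u) (some v) ↔ H.Adj u v ∧ s(u, v) ≠ s(x, y) := by
  simp only [SubdivideEdge, fromRel_adj, ne_eq, Option.some.injEq, reduceCtorEq, false_and,
    or_false, exists_and_left, exists_eq_left', Sym2.eq_iff]
  constructor
  · rintro ⟨-, h | h⟩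
    · exact h
    · exact ⟨h.1.symm, by tauto⟩
  · rintro ⟨h, hs⟩
    exact ⟨h.ne, Or.inl ⟨h, hs⟩⟩

theorem subdivideEdge_adj_none_some {z : W} :
    (SubdivideEdge H x y).Adj none (some z) ↔ z = x ∨ z = y := by
  simp [SubdivideEdge, eq_comm]

theorem subdivideEdge_adj_some_none {z : W} :
    (SubdivideEdge H x y).Adj (some z) none ↔ z = x ∨ z = y := by
  rw [adj_comm, subdivideEdge_adj_none_some]

end SubdivideEdge

theorem ncard_neighborSet_le_maxDeg {W : Type} [Fintype W] (H : SimpleGraph W) (v : W) :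
    (H.neighborSet v).ncard ≤ maxDeg H :=
  Finset.le_sup (f := fun v => (H.neighborSet v).ncard) (Finset.mem_univ v)

namespace SimpleGraph

variable {α : Type} {C : SimpleGraph α}

theorem Walk.exists_isPath_meeting_set_only_at_end {a b : α} (p : C.Walk a b) {S : Set α}
    (hb : b ∈ S) :
    ∃ c ∈ S, ∃ q : C.Walk a c, q.IsPath ∧ ∀ t ∈ q.support, t ∈ S → t = c := by
  classical
  induction p with
  | nil => exact ⟨_, hb, nil, .nil, by simp⟩
  | @cons u v w h p ih =>
    by_cases hu : u ∈ S
    · exact ⟨u, hu, nil, .nil, by simp⟩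
    obtain ⟨c, hc, q, -, hq⟩ := ih hb
    refine ⟨c, hc, (cons h q).bypass, bypass_isPath _, fun t ht htS => ?_⟩
    rcases List.mem_cons.1 (support_bypass_subset_support _ ht) with rfl | ht
    exacts [(hu htS).elim, hq t ht htS]

theorem Connected.exists_spider (hC : C.Connected) (t₀ t₁ t₂ : α) :
    ∃ (c : α) (L₀ : C.Walk c t₀) (L₁ : C.Walk c t₁) (L₂ : C.Walk c t₂),
      L₀.IsPath ∧ L₁.IsPath ∧ L₂.IsPath ∧
      (∀ t ∈ L₀.support, t ∈ L₁.support → t = c) ∧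
      (∀ t ∈ L₀.support, t ∈ L₂.support → t = c) ∧
      (∀ t ∈ L₁.support, t ∈ L₂.support → t = c) := by
  classical
  -- `c` is the first vertex of a `t₂`–`t₀` walk on a `t₀`–`t₁` path `P`.
  obtain ⟨P, hP⟩ : ∃ P : C.Walk t₀ t₁, P.IsPath := ⟨_, (hC.preconnected t₀ t₁).some.bypass_isPath⟩
  obtain ⟨c, hc, Q, hQ, hQP⟩ := (hC.preconnected t₂ t₀).some.exists_isPath_meeting_set_only_at_end
    (S := {v | v ∈ P.support}) P.start_mem_support
  refine ⟨c, (P.takeUntil c hc).reverse, P.dropUntil c hc, Q.reverse, (hP.takeUntil hc).reverse,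
    hP.dropUntil hc, hQ.reverse, fun t h₀ h₁ => ?_, fun t h₀ h₂ => ?_, fun t h₁ h₂ => ?_⟩
  · rw [support_reverse, List.mem_reverse] at h₀
    rw [← cons_tail_support, List.mem_cons] at h₁
    refine h₁.resolve_right fun h₁ => ?_
    have hnd := hP.support_nodup
    rw [← take_spec P hc, support_append] at hnd
    exact List.disjoint_of_nodup_append hnd h₀ h₁
  · rw [support_reverse, List.mem_reverse] at h₀ h₂
    exact hQP t h₂ (support_takeUntil_subset_support _ hc h₀)
  · rw [support_reverse, List.mem_reverse] at h₂
    exact hQP t h₂ (support_dropUntil_subset_support _ hc h₁)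

theorem Connected.exists_legs (hC : C.Connected) {ι : Type} [Finite ι] (hι : Nat.card ι ≤ 3)
    (t : ι → α) :
    ∃ (c : α) (L : ∀ j, C.Walk c (t j)), (∀ j, (L j).IsPath) ∧
      ∀ j j', j ≠ j' → ∀ v ∈ (L j).support, v ∈ (L j').support → v = c := by
  have := Fintype.ofFinite ι
  obtain ⟨emb⟩ : Nonempty (ι ↪ Fin 3) :=
    Function.Embedding.nonempty_of_card_le (by simpa [Nat.card_eq_fintype_card] using hι)
  let t' := Function.extend emb t fun _ => hC.nonempty.some
  obtain ⟨c, L₀, L₁, L₂, p₀, p₁, p₂, d₀₁, d₀₂, d₁₂⟩ := hC.exists_spider (t' 0) (t' 1) (t' 2)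
  let L' : ∀ m, C.Walk c (t' m)
    | 0 => L₀
    | 1 => L₁
    | 2 => L₂
  have hL' : ∀ m, (L' m).IsPath := by
    intro m
    fin_cases m
    exacts [p₀, p₁, p₂]
  have dL' : ∀ m m', m ≠ m' → ∀ v ∈ (L' m).support, v ∈ (L' m').support → v = c := by
    intro m m' hm v hv hv'
    fin_cases m <;> fin_cases m' <;> simp at hm
    exacts [d₀₁ v hv hv', d₀₂ v hv hv', d₀₁ v hv' hv, d₁₂ v hv hv', d₀₂ v hv' hv, d₁₂ v hv' hv]
  refine ⟨c, fun j => (L' (emb j)).copy rfl (emb.injective.extend_apply _ _ _),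
    fun j => (isPath_copy _ _ _).2 (hL' _), fun j j' hj v hv hv' => ?_⟩
  rw [support_copy] at hv hv'
  exact dL' _ _ (emb.injective.ne hj) v hv hv'

variable {V : Type} {G : SimpleGraph V}

theorem Walk.mem_support_append_cons_reverse {u a b w : V} (p : G.Walk u a) (h : G.Adj a b)
    (q : G.Walk w b) {v : V} :
    v ∈ (p.append (cons h q.reverse)).support ↔ v ∈ p.support ∨ v ∈ q.support := by
  simp only [mem_support_append_iff, support_cons, support_reverse, List.mem_cons,
    List.mem_reverse]
  constructor
  · rintro (hv | rfl | hv)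
    exacts [Or.inl hv, Or.inl p.end_mem_support, Or.inr hv]
  · rintro (hv | hv)
    exacts [Or.inl hv, Or.inr (Or.inr hv)]

theorem Walk.IsPath.append_cons_reverse {u a b w : V} {p : G.Walk u a} (h : G.Adj a b)
    {q : G.Walk w b} (hp : p.IsPath) (hq : q.IsPath) (hpq : ∀ v ∈ p.support, v ∉ q.support) :
    (p.append (cons h q.reverse)).IsPath := by
  rw [isPath_def, support_append, support_cons, List.tail_cons, support_reverse,
    List.nodup_append]
  exact ⟨hp.support_nodup, List.nodup_reverse.2 hq.support_nodup,
    fun v hv v' hv' hvv' => hpq v hv (hvv' ▸ List.mem_reverse.1 hv')⟩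

theorem Connected.exists_legs_of_induce {S : Set V} (hS : (G.induce S).Connected) {ι : Type}
    [Finite ι] (hι : Nat.card ι ≤ 3) (t : ι → V) (ht : ∀ j, t j ∈ S) :
    ∃ c ∈ S, ∃ L : ∀ j, G.Walk c (t j), (∀ j, (L j).IsPath ∧ ∀ v ∈ (L j).support, v ∈ S) ∧
      ∀ j j', j ≠ j' → ∀ v ∈ (L j).support, v ∈ (L j').support → v = c := by
  obtain ⟨c, L, hL, hLL⟩ := hS.exists_legs hι fun j => ⟨t j, ht j⟩
  let φ := (Embedding.induce (G := G) S).toHom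
  refine ⟨c, c.2, fun j => (L j).map φ, fun j => ⟨(hL j).map Subtype.val_injective, ?_⟩, ?_⟩
  · intro v hv
    change v ∈ ((L j).map φ).support at hv
    rw [Walk.support_map, List.mem_map] at hv
    obtain ⟨v, -, rfl⟩ := hv
    exact v.2
  · intro j j' hj v hv hv'
    change v ∈ ((L j).map φ).support at hv
    change v ∈ ((L j').map φ).support at hv'
    rw [Walk.support_map, List.mem_map] at hv hv'
    obtain ⟨u, hu, rfl⟩ := hv
    obtain ⟨u', hu', huu'⟩ := hv'
    obtain rfl := Subtype.val_injective huu'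
    exact congrArg Subtype.val (hLL j j' hj u' hu hu')

end SimpleGraph

structure TopologicalMinorModel {W V : Type} (H : SimpleGraph W) (G : SimpleGraph V) where
  branch : W ↪ V
  path : ∀ ⦃i j⦄, H.Adj i j → G.Walk (branch i) (branch j)
  isPath : ∀ ⦃i j⦄ (h : H.Adj i j), (path h).IsPath
  mem_range_of_mem_of_mem : ∀ ⦃i j k l⦄ (h : H.Adj i j) (h' : H.Adj k l), s(i, j) ≠ s(k, l) →
    ∀ v ∈ (path h).support, v ∈ (path h').support → v ∈ Set.range branch
  mem_of_branch_mem : ∀ ⦃i j⦄ (h : H.Adj i j) (m : W), branch m ∈ (path h).support → m ∈ s(i, j)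

namespace TopologicalMinorModel

variable {V W : Type} {G : SimpleGraph V} {H : SimpleGraph W}

section Model

variable (d : TopologicalMinorModel H G)

def interior : Set V :=
  {v | ∃ i j, ∃ h : H.Adj i j, v ∈ (d.path h).support} \ Set.range d.branch

theorem interior_finite [Finite W] : d.interior.Finite := by
  refine Set.Finite.sdiff (Set.Finite.subset (Set.finite_iUnion fun i => Set.finite_iUnion
    fun j => Set.finite_iUnion fun h : H.Adj i j => (d.path h).support.finite_toSet) ?_)
  rintro v ⟨i, j, h, hv⟩
  exact Set.mem_iUnion₂.2 ⟨i, j, Set.mem_iUnion.2 ⟨h, hv⟩⟩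

theorem snd_notMem_range {x y : W} {w : V} {hxy : H.Adj x y} {e : G.Adj (d.branch x) w}
    {q : G.Walk w (d.branch y)} (hp : d.path hxy = cons e q) (hw : w ≠ d.branch y) :
    w ∉ Set.range d.branch := by
  rintro ⟨m, rfl⟩
  have hm := d.mem_of_branch_mem hxy m (by simp [hp])
  rcases Sym2.mem_iff.1 hm with rfl | rfl
  · have := d.isPath hxy
    rw [hp, cons_isPath_iff] at this
    exact this.2 q.start_mem_support
  · exact hw rfl

section SubdivideEdge

variable {x y : W} {w : V} (e : G.Adj (d.branch x) w) (q : G.Walk w (d.branch y))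

open Classical in
noncomputable def spoke (z : W) (hz : z = x ∨ z = y) : G.Walk w (d.branch z) :=
  if hzx : z = x then e.symm.toWalk.copy rfl (by rw [hzx])
  else q.copy rfl (by rw [hz.resolve_left hzx])

theorem mem_support_spoke {z : W} {hz : z = x ∨ z = y} {t : V}
    (ht : t ∈ (d.spoke e q z hz).support) :
    (z = x ∧ (t = w ∨ t = d.branch x)) ∨ (z = y ∧ t ∈ q.support) := by
  unfold spoke at ht
  split_ifs at ht with hzx
  · subst hzx
    exact Or.inl ⟨rfl, by simpa using ht⟩
  · obtain rfl := hz.resolve_left hzx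
    exact Or.inr ⟨rfl, by simpa using ht⟩

noncomputable def subdividePath (hw : w ∉ Set.range d.branch) : ∀ ⦃i j : Option W⦄,
    (SubdivideEdge H x y).Adj i j →
      G.Walk (d.branch.optionElim w hw i) (d.branch.optionElim w hw j)
  | some _, some _, h => d.path (subdivideEdge_adj_some_some.1 h).1
  | none, some z, h => d.spoke e q z (subdivideEdge_adj_none_some.1 h)
  | some z, none, h => (d.spoke e q z (subdivideEdge_adj_some_none.1 h)).reverse
  | none, none, h => (h.ne rfl).elim

variable {e q} {hxy : H.Adj x y} (hp : d.path hxy = cons e q) (hw : w ∉ Set.range d.branch)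

include hp in
theorem mem_support_of_mem_tail {t : V} (ht : t ∈ q.support) :
    t ∈ (d.path hxy).support := by
  simp [hp, ht]

include hp in
theorem branch_notMem_tail : d.branch x ∉ q.support := by
  have := d.isPath hxy
  rw [hp, cons_isPath_iff] at this
  exact this.2

include hp in
theorem isPath_spoke {z : W} (hz : z = x ∨ z = y) : (d.spoke e q z hz).IsPath := by
  unfold spoke
  split_ifs
  · exact (isPath_copy _ _ _).2 e.symm.isPath_toWalk
  · refine (isPath_copy _ _ _).2 ?_
    have := d.isPath hxy
    rw [hp, cons_isPath_iff] at this
    exact this.1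

theorem mem_support_subdividePath {i j : Option W} (h : (SubdivideEdge H x y).Adj i j) {t : V}
    (ht : t ∈ (d.subdividePath e q hw h).support) :
    (∃ u v, ∃ h' : H.Adj u v, s(u, v) ≠ s(x, y) ∧ i = some u ∧ j = some v ∧
        t ∈ (d.path h').support) ∨
      (s(i, j) = s(none, some x) ∧ (t = w ∨ t = d.branch x)) ∨
      (s(i, j) = s(none, some y) ∧ t ∈ q.support) := by
  match i, j with
  | some u, some v =>
    exact Or.inl ⟨u, v, _, (subdivideEdge_adj_some_some.1 h).2, rfl, rfl, ht⟩
  | none, some z =>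
    change t ∈ (d.spoke e q z (subdivideEdge_adj_none_some.1 h)).support at ht
    rcases d.mem_support_spoke e q ht with ⟨rfl, ht⟩ | ⟨rfl, ht⟩
    exacts [Or.inr (Or.inl ⟨rfl, ht⟩), Or.inr (Or.inr ⟨rfl, ht⟩)]
  | some z, none =>
    change t ∈ (d.spoke e q z (subdivideEdge_adj_some_none.1 h)).reverse.support at ht
    rw [support_reverse, List.mem_reverse] at ht
    rcases d.mem_support_spoke e q ht with ⟨rfl, ht⟩ | ⟨rfl, ht⟩
    exacts [Or.inr (Or.inl ⟨Sym2.eq_swap, ht⟩), Or.inr (Or.inr ⟨Sym2.eq_swap, ht⟩)]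
  | none, none => exact (h.ne rfl).elim

include hp hw

theorem isPath_subdividePath : ∀ ⦃i j : Option W⦄ (h : (SubdivideEdge H x y).Adj i j),
    (d.subdividePath e q hw h).IsPath
  | some _, some _, _ => d.isPath _
  | none, some _, h => d.isPath_spoke hp (subdivideEdge_adj_none_some.1 h)
  | some _, none, h => (d.isPath_spoke hp (subdivideEdge_adj_some_none.1 h)).reverse
  | none, none, h => (h.ne rfl).elim

theorem snd_notMem_support_of_ne {u v : W} (h : H.Adj u v) (hs : s(u, v) ≠ s(x, y)) :
    w ∉ (d.path h).support :=
  fun hw' => hw (d.mem_range_of_mem_of_mem hxy h hs.symm w (by simp [hp]) hw')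

theorem mem_range_of_mem_of_mem_subdividePath ⦃i j k l : Option W⦄
    (h₁ : (SubdivideEdge H x y).Adj i j) (h₂ : (SubdivideEdge H x y).Adj k l)
    (hne : s(i, j) ≠ s(k, l)) (t : V) (ht₁ : t ∈ (d.subdividePath e q hw h₁).support)
    (ht₂ : t ∈ (d.subdividePath e q hw h₂).support) :
    t ∈ Set.range (d.branch.optionElim w hw) := by
  have of_spoke : t = w ∨ t = d.branch x → t ∈ Set.range (d.branch.optionElim w hw) := by
    rintro (rfl | rfl)
    exacts [⟨none, rfl⟩, ⟨some x, rfl⟩]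
  have of_old : t ∈ Set.range d.branch → t ∈ Set.range (d.branch.optionElim w hw) := by
    rintro ⟨m, rfl⟩
    exact ⟨some m, rfl⟩
  have sub : ∀ {t}, t ∈ q.support → t ∈ (d.path hxy).support :=
    d.mem_support_of_mem_tail hp
  rcases d.mem_support_subdividePath hw h₁ ht₁ with
    ⟨u, v, h, hs, rfl, rfl, ht⟩ | ⟨-, hx⟩ | ⟨hs₁, hq⟩
  · rcases d.mem_support_subdividePath hw h₂ ht₂ with
      ⟨u', v', h', -, rfl, rfl, ht'⟩ | ⟨-, hx'⟩ | ⟨-, hq'⟩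
    · exact of_old (d.mem_range_of_mem_of_mem h h' (fun h => hne (congrArg (Sym2.map some) h))
        t ht ht')
    · exact of_spoke hx'
    · exact of_old (d.mem_range_of_mem_of_mem h hxy hs t ht (sub hq'))
  · exact of_spoke hx
  · rcases d.mem_support_subdividePath hw h₂ ht₂ with
      ⟨u', v', h', hs', rfl, rfl, ht'⟩ | ⟨-, hx'⟩ | ⟨hs₂, -⟩
    · exact of_old (d.mem_range_of_mem_of_mem hxy h' hs'.symm t (sub hq) ht')
    · exact of_spoke hx'
    · exact (hne (hs₁.trans hs₂.symm)).elim

theorem mem_of_branch_mem_subdividePath ⦃i j : Option W⦄ (h : (SubdivideEdge H x y).Adj i j)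
    (m : Option W) (hm : d.branch.optionElim w hw m ∈ (d.subdividePath e q hw h).support) :
    m ∈ s(i, j) := by
  rcases d.mem_support_subdividePath hw h hm with ⟨u, v, h', hs, rfl, rfl, ht⟩ | ⟨hs, ht⟩ | ⟨hs, ht⟩
  · cases m with
    | none => exact (d.snd_notMem_support_of_ne hp hw h' hs ht).elim
    | some m => simpa using d.mem_of_branch_mem h' m ht
  · rw [hs]
    rcases ht with ht | ht
    · exact (d.branch.optionElim w hw).injective (a₂ := none) ht ▸ Sym2.mem_mk_left _ _
    · exact (d.branch.optionElim w hw).injective (a₂ := some x) ht ▸ Sym2.mem_mk_right _ _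
  · rw [hs]
    cases m with
    | none => exact Sym2.mem_mk_left _ _
    | some m =>
      rcases Sym2.mem_iff.1 (d.mem_of_branch_mem hxy m
        (d.mem_support_of_mem_tail hp ht)) with rfl | rfl
      · exact (d.branch_notMem_tail hp ht).elim
      · exact Sym2.mem_mk_right _ _

/-- The second vertex `w` of the path of `xy` becomes the branch vertex of the new vertex. -/
noncomputable def subdivideEdge : TopologicalMinorModel (SubdivideEdge H x y) G where
  branch := d.branch.optionElim w hw
  path := d.subdividePath e q hw
  isPath := d.isPath_subdividePath hp hw
  mem_range_of_mem_of_mem := d.mem_range_of_mem_of_mem_subdividePath hp hw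
  mem_of_branch_mem := d.mem_of_branch_mem_subdividePath hp hw

theorem interior_subdivideEdge_ssubset : (d.subdivideEdge hp hw).interior ⊂ d.interior := by
  refine (Set.ssubset_iff_of_subset ?_).2 ⟨w, ⟨⟨x, y, hxy, by simp [hp]⟩, hw⟩, ?_⟩
  · rintro t ⟨⟨i, j, h, ht⟩, hb⟩
    refine ⟨?_, fun ⟨m, hm⟩ => hb ⟨some m, hm⟩⟩
    rcases d.mem_support_subdividePath hw h ht with ⟨u, v, h', -, -, -, ht⟩ | ⟨-, ht⟩ | ⟨-, ht⟩
    · exact ⟨u, v, h', ht⟩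
    · exact ⟨x, y, hxy, by rcases ht with rfl | rfl <;> simp [hp]⟩
    · exact ⟨x, y, hxy, d.mem_support_of_mem_tail hp ht⟩
  · exact fun hi => hi.2 ⟨none, rfl⟩

end SubdivideEdge

end Model

theorem isTopologicalMinor [Finite W] (d : TopologicalMinorModel H G) :
    IsTopologicalMinor H G := by
  induction hn : d.interior.ncard using Nat.strong_induction_on generalizing W with
  | _ n ih =>
  by_cases hadj : ∀ ⦃i j⦄, H.Adj i j → G.Adj (d.branch i) (d.branch j)
  · exact ⟨W, H, .of_iso .refl, ⟨⟨d.branch, fun h => hadj h⟩, d.branch.injective⟩⟩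
  push Not at hadj
  obtain ⟨x, y, hxy, hxy'⟩ := hadj
  obtain ⟨w, e, q, hp⟩ := exists_eq_cons_of_ne (d.branch.injective.ne hxy.ne) (d.path hxy)
  have hw := d.snd_notMem_range hp (by rintro rfl; exact hxy' e)
  have hlt := Set.ncard_lt_ncard (d.interior_subdivideEdge_ssubset hp hw) d.interior_finite
  obtain ⟨U, K, hK, hKG⟩ := ih _ (hn ▸ hlt) (d.subdivideEdge hp hw) rfl
  exact ⟨U, K, .step x y hxy hK, hKG⟩

end TopologicalMinorModel

theorem exists_symmetric_attachments {W V : Type} {H : SimpleGraph W} {G : SimpleGraph V}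
    {f : W → Set V} (hadj : ∀ i j, H.Adj i j → ∃ u ∈ f i, ∃ v ∈ f j, G.Adj u v) :
    ∃ a : ∀ ⦃i j⦄, H.Adj i j → V,
      (∀ ⦃i j⦄ (h : H.Adj i j), a h ∈ f i) ∧ ∀ ⦃i j⦄ (h : H.Adj i j), G.Adj (a h) (a h.symm) := by
  choose u hu v hv huv using hadj
  -- The edge chosen for `(i, j)` with `i < j` serves both orientations.
  let _ : LinearOrder W := WellOrderingRel.isWellOrder.linearOrder
  refine ⟨fun i j h => if i < j then u i j h else v j i h.symm, fun i j h => ?_, fun i j h => ?_⟩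
  · dsimp only
    split_ifs
    exacts [hu i j h, hv j i h.symm]
  · rcases lt_trichotomy i j with hij | rfl | hij
    · simpa [hij, hij.not_gt] using huv i j h
    · exact (h.ne rfl).elim
    · simpa [hij, hij.not_gt] using (huv j i h.symm).symm

theorem IsMinor.nonempty_topologicalMinorModel {W V : Type} [Finite W] {H : SimpleGraph W}
    {G : SimpleGraph V} (hm : IsMinor H G) (hdeg : ∀ i, (H.neighborSet i).ncard ≤ 3) :
    Nonempty (TopologicalMinorModel H G) := by
  obtain ⟨f, -, hdisj, hconn, hadj⟩ := hm
  obtain ⟨a, ha, haa⟩ := exists_symmetric_attachments hadj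
  choose c hc L hL hLL using fun i => (hconn i).exists_legs_of_induce
    (ι := H.neighborSet i) (by rw [Nat.card_coe_set_eq]; exact hdeg i) (fun j => a j.2)
    (fun j => ha j.2)
  have eq_of_mem : ∀ {i j v}, v ∈ f i → v ∈ f j → i = j := fun hi hj =>
    by_contra fun hne => Set.disjoint_left.1 (hdisj hne) hi hj
  let P : ∀ ⦃i j⦄, H.Adj i j → G.Walk (c i) (c j) := fun i j h =>
    (L i ⟨j, h⟩).append (cons (haa h) (L j ⟨i, h.symm⟩).reverse)
  have mem_P : ∀ ⦃i j⦄ (h : H.Adj i j) v, v ∈ (P h).support →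
      ∃ a b, ∃ hab : H.Adj a b, s(a, b) = s(i, j) ∧ v ∈ (L a ⟨b, hab⟩).support := by
    intro i j h v hv
    rcases (mem_support_append_cons_reverse _ _ _).1 hv with hv | hv
    exacts [⟨i, j, h, rfl, hv⟩, ⟨j, i, h.symm, Sym2.eq_swap, hv⟩]
  refine ⟨⟨⟨c, fun i j hij => eq_of_mem (hc i) (hij ▸ hc j)⟩, P, fun i j h => ?_, ?_, ?_⟩⟩
  · exact (hL i _).1.append_cons_reverse _ (hL j _).1 fun v hv hv' =>
      h.ne (eq_of_mem ((hL i _).2 v hv) ((hL j _).2 v hv'))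
  · intro i j k l h h' hne v hv hv'
    obtain ⟨a, b, _, hs, hv⟩ := mem_P h v hv
    obtain ⟨a', b', _, hs', hv'⟩ := mem_P h' v hv'
    obtain rfl := eq_of_mem ((hL a _).2 v hv) ((hL a' _).2 v hv')
    have hbb' : b ≠ b' := by
      rintro rfl
      exact hne (hs.symm.trans hs')
    exact ⟨a, (hLL a _ _ (fun heq => hbb' (congrArg Subtype.val heq)) v hv hv').symm⟩
  · intro i j h m hm
    obtain ⟨a, b, _, hs, hm⟩ := mem_P h _ hm
    obtain rfl := eq_of_mem (hc m) ((hL a _).2 _ hm)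
    exact hs ▸ Sym2.mem_mk_left _ _

theorem topologicalMinor_of_minor_of_maxDeg_le_three_general {V W : Type} [Fintype W]
    (G : SimpleGraph V) (H : SimpleGraph W)
    (hm : IsMinor H G) (hd : maxDeg H ≤ 3) : IsTopologicalMinor H G := by
  obtain ⟨d⟩ := hm.nonempty_topologicalMinorModel fun i =>
    (ncard_neighborSet_le_maxDeg H i).trans hd
  exact d.isTopologicalMinor

/-- If `H` is a minor of `G` and `Δ(H) ≤ 3`, then `H` is a topological minor of `G`. -/
theorem topologicalMinor_of_minor_of_maxDeg_le_three {V W : Type} [Fintype V] [Fintype W]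
    [Nonempty V] [Nonempty W] (G : SimpleGraph V) (H : SimpleGraph W)
    (hm : IsMinor H G) (hd : maxDeg H ≤ 3) : IsTopologicalMinor H G :=
  topologicalMinor_of_minor_of_maxDeg_le_three_general G H hm hd
end

section
/- If G is a k-connected graph, x is a vertex of G, and U ⊆ V(G) \ {x} has size at least k, then there exists an x,U-fan of size k in G. -/
open SimpleGraph

/-!
The fan lemma is Menger's theorem applied to the neighbourhood of `x` and the set `U`: in a
`k`-connected graph every `N(x)`–`U` separator has at least `k` vertices, so there are `k`
disjoint `N(x)`–`U` paths, and prefixing each with the edge from `x` gives the fan.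

Menger's theorem is proved following Göring: induct on the number of edges. If deleting an
edge `xy` leaves no small separator, use induction there. Otherwise `G - xy` has an `A`–`B`
separator `S` with `|S| < k`; some `A`–`B` path of `G` avoiding `S` crosses `xy`, say from `y`
to `x`. Then `S ∪ {y}` and `S ∪ {x}` are minimum separators of `G`, induction in `G - xy` gives
`k` disjoint `A`–`(S ∪ {y})` paths and `k` disjoint `(S ∪ {x})`–`B` paths, and these are joined
through `S` and the edge `yx`.
-/

namespace SimpleGraph

variable {V : Type*} {G H : SimpleGraph V} {A B S T X : Set V} {a b w x y : V} {k : ℕ}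

def Separates (G : SimpleGraph V) (A B S : Set V) : Prop :=
  ∀ ⦃a b : V⦄, a ∈ A → b ∈ B → ∀ p : G.Walk a b, ∃ s ∈ S, s ∈ p.support

structure Walk.IsPathBetween (p : G.Walk a b) (A B : Set V) : Prop where
  isPath : p.IsPath
  start_mem : a ∈ A
  end_mem : b ∈ B
  eq_start : ∀ z ∈ p.support, z ∈ A → z = a
  eq_end : ∀ z ∈ p.support, z ∈ B → z = b

def HasDisjointPaths (G : SimpleGraph V) (A B : Set V) (k : ℕ) : Prop :=
  ∃ (a b : Fin k → V) (P : ∀ i, G.Walk (a i) (b i)),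
    (∀ i, (P i).IsPathBetween A B) ∧ Pairwise fun i j => (P i).support.Disjoint (P j).support

namespace Walk

theorem exists_prefix_first_mem (X : Set V) :
    ∀ {a b : V} (p : G.Walk a b), (∃ z ∈ X, z ∈ p.support) →
      ∃ w ∈ X, ∃ q : G.Walk a w, q.support ⊆ p.support ∧ ∀ z ∈ q.support, z ∈ X → z = w
  | _, _, nil, ⟨z, hz, hzp⟩ => by
    rw [support_nil, List.mem_singleton] at hzp
    subst hzp
    exact ⟨z, hz, nil, List.Subset.refl _, by simp⟩
  | a, _, cons h p, hX => by
    by_cases ha : a ∈ X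
    · exact ⟨a, ha, nil, by simp, by simp⟩
    obtain ⟨w, hw, q, hqp, hq⟩ := p.exists_prefix_first_mem X <| by
      obtain ⟨z, hz, hzp⟩ := hX
      exact ⟨z, hz, (List.mem_cons.1 hzp).resolve_left (by rintro rfl; exact ha hz)⟩
    refine ⟨w, hw, cons h q, List.cons_subset_cons _ hqp, ?_⟩
    rintro z hz hzX
    rcases List.mem_cons.1 hz with rfl | hz
    · exact absurd hzX ha
    · exact hq z hz hzX

theorem exists_isPathBetween (p : G.Walk a b) (ha : a ∈ A) (hb : b ∈ B) :
    ∃ (a' b' : V) (q : G.Walk a' b'), q.IsPathBetween A B ∧ q.support ⊆ p.support := by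
  obtain ⟨b', hb', q₁, hq₁p, hq₁⟩ := p.exists_prefix_first_mem B ⟨b, hb, p.end_mem_support⟩
  obtain ⟨a', ha', q₂, hq₂q₁, hq₂⟩ :=
    q₁.reverse.exists_prefix_first_mem A ⟨a, ha, by simp⟩
  classical
  have hsub : q₂.reverse.bypass.support ⊆ q₁.support := fun z hz => by
    simpa using hq₂q₁ (by simpa using q₂.reverse.support_bypass_subset_support hz)
  refine ⟨a', b', q₂.reverse.bypass,
    ⟨q₂.reverse.bypass_isPath, ha', hb', fun z hz hzA => ?_, fun z hz hzB => hq₁ z (hsub hz) hzB⟩,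
    fun _ hz => hq₁p (hsub hz)⟩
  exact hq₂ z (by simpa using q₂.reverse.support_bypass_subset_support hz) hzA

theorem injective_start_of_pairwise_disjoint {ι : Type*} {a b : ι → V}
    {P : ∀ i, G.Walk (a i) (b i)} (hP : Pairwise fun i j => (P i).support.Disjoint (P j).support) :
    Function.Injective a := fun i j h => by
  by_contra hij
  exact hP hij (P i).start_mem_support (by rw [h]; exact (P j).start_mem_support)

theorem injective_end_of_pairwise_disjoint {ι : Type*} {a b : ι → V}
    {P : ∀ i, G.Walk (a i) (b i)} (hP : Pairwise fun i j => (P i).support.Disjoint (P j).support) :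
    Function.Injective b := fun i j h => by
  by_contra hij
  exact hP hij (P i).end_mem_support (by rw [h]; exact (P j).end_mem_support)

theorem IsPath.notMem_of_mem_support_takeUntil [DecidableEq V] {p : G.Walk a b} (hp : p.IsPath)
    (hX : ∀ z ∈ p.support, z ∈ X → z = b) (hw : w ∈ p.support) (hwX : w ∉ X) :
    ∀ z ∈ (p.takeUntil w hw).support, z ∉ X := fun z hz hzX => by
  have hzb := hX z (p.support_takeUntil_subset_support hw hz) hzX
  subst hzb
  exact endpoint_notMem_support_takeUntil hp hw (fun h => hwX (h ▸ hzX)) hz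

/-- A walk meeting `X` only at its end uses no edge with both ends in `X`. -/
theorem exists_prefix_deleteEdges (p : G.Walk a b) (hp : ∃ z ∈ X, z ∈ p.support) (hx : x ∈ X)
    (hy : y ∈ X) (hxy : x ≠ y) :
    ∃ w ∈ X, ∃ q : (G.deleteEdges {s(x, y)}).Walk a w,
      q.support ⊆ p.support ∧ ∀ z ∈ q.support, z ∈ X → z = w := by
  obtain ⟨w, hw, q, hqp, hq⟩ := p.exists_prefix_first_mem X hp
  have he : s(x, y) ∉ q.edges := fun he =>
    hxy ((hq x (q.fst_mem_support_of_mem_edges he) hx).trans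
      (hq y (q.snd_mem_support_of_mem_edges he) hy).symm)
  exact ⟨w, hw, q.toDeleteEdge _ he, by simpa using hqp, by simpa using hq⟩

end Walk

namespace Separates

theorem symm (h : G.Separates A B S) : G.Separates B A S := fun _ _ hb ha p => by
  simpa using h ha hb p.reverse

theorem singleton_right (h : G.Separates A B S) (r : G.Walk w b) (hb : b ∈ B)
    (hr : ∀ s ∈ S, s ∉ r.support) : G.Separates A {w} S := by
  rintro a _ ha rfl p
  obtain ⟨s, hs, hsp⟩ := h ha hb (p.append r)
  rw [Walk.mem_support_append_iff] at hsp
  exact ⟨s, hs, hsp.resolve_right (hr s hs)⟩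

theorem insert_of_deleteEdges (h : (G.deleteEdges {s(x, y)}).Separates A B S) :
    G.Separates A B (insert x S) := fun a b ha hb p => by
  by_cases hx : x ∈ p.support
  · exact ⟨x, Set.mem_insert _ _, hx⟩
  obtain ⟨s, hs, hsp⟩ := h ha hb (p.toDeleteEdge _ fun he => hx (p.fst_mem_support_of_mem_edges he))
  exact ⟨s, Set.mem_insert_of_mem _ hs, by simpa using hsp⟩

theorem deleteEdges_orientation (h : (G.deleteEdges {s(x, y)}).Separates A B S)
    (hG : ¬ G.Separates A B S) (hxy : x ≠ y) :
    ((G.deleteEdges {s(x, y)}).Separates A {x} S ∧ (G.deleteEdges {s(x, y)}).Separates {y} B S) ∨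
      ((G.deleteEdges {s(x, y)}).Separates A {y} S ∧
        (G.deleteEdges {s(x, y)}).Separates {x} B S) := by
  simp only [Separates, not_forall, not_exists, not_and] at hG
  obtain ⟨a, b, ha, hb, p, hp⟩ := hG
  have hpx : ∃ z ∈ ({x, y} : Set V), z ∈ p.support := by
    obtain ⟨s, hs, hsp⟩ := h.insert_of_deleteEdges ha hb p
    rcases hs with rfl | hs
    · exact ⟨s, Set.mem_insert _ _, hsp⟩
    · exact absurd hsp (hp s hs)
  obtain ⟨w, hw, q, hqp, -⟩ := p.exists_prefix_deleteEdges hpx (Set.mem_insert _ _)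
    (Set.mem_insert_of_mem _ rfl) hxy
  obtain ⟨w', hw', r, hrp, -⟩ := p.reverse.exists_prefix_deleteEdges (X := {x, y})
    (hpx.imp fun _ ⟨hz, hzp⟩ => ⟨hz, by simpa using hzp⟩)
    (Set.mem_insert _ _) (Set.mem_insert_of_mem _ rfl) hxy
  have hq : ∀ s ∈ S, s ∉ q.support := fun s hs hsq => hp s hs (hqp hsq)
  have hr : ∀ s ∈ S, s ∉ r.reverse.support := fun s hs hsr =>
    hp s hs (by simpa using hrp (by simpa using hsr))
  have hAw' := h.singleton_right r.reverse hb hr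
  have hwB := (h.symm.singleton_right q.reverse ha (by simpa using hq)).symm
  have hne : w ≠ w' := by
    rintro rfl
    obtain ⟨s, hs, hsq⟩ := hAw' ha rfl q
    exact hq s hs hsq
  rcases hw with rfl | rfl <;> rcases hw' with rfl | rfl
  · exact absurd rfl hne
  · exact Or.inr ⟨hAw', hwB⟩
  · exact Or.inl ⟨hAw', hwB⟩
  · exact absurd rfl hne

/-- Outside `Z` the two paths would combine to an `A`–`B` walk avoiding `Z`. -/
theorem mem_of_mem_support_of_mem_support {Z : Set V} {z z' : V} {P : G.Walk a z}
    {Q : G.Walk z' b} (hZ : G.Separates A B Z) (hP : P.IsPathBetween A Z)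
    (hQ : Q.IsPathBetween Z B) (hwP : w ∈ P.support) (hwQ : w ∈ Q.support) : w ∈ Z := by
  classical
  by_contra hwZ
  have hwQ' : w ∈ Q.reverse.support := by simpa using hwQ
  obtain ⟨s, hsZ, hs⟩ := hZ hP.start_mem hQ.end_mem
    ((P.takeUntil w hwP).append (Q.reverse.takeUntil w hwQ').reverse)
  rw [Walk.mem_support_append_iff, Walk.support_reverse, List.mem_reverse] at hs
  rcases hs with hs | hs
  · exact hP.isPath.notMem_of_mem_support_takeUntil hP.eq_end hwP hwZ s hs hsZ
  · exact hQ.isPath.reverse.notMem_of_mem_support_takeUntil (by simpa using hQ.eq_start) hwQ'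
      hwZ s hs hsZ

/-- With `x` cut off from `A`, every `A`–`B` walk of `G` starts with an `A`–`(S ∪ {y})` walk
of `G - xy`. -/
theorem of_deleteEdges (h : (G.deleteEdges {s(x, y)}).Separates A B S)
    (hx : (G.deleteEdges {s(x, y)}).Separates A {x} S) (hxy : x ≠ y)
    (hT : (G.deleteEdges {s(x, y)}).Separates A (insert y S) T) : G.Separates A B T := by
  intro a b ha hb p
  have hp : ∃ z ∈ insert x (insert y S), z ∈ p.support := by
    obtain ⟨z, hz, hzp⟩ := h.insert_of_deleteEdges ha hb p
    exact ⟨z, Set.insert_subset_insert (Set.subset_insert _ _) hz, hzp⟩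
  obtain ⟨w, hw, q, hqp, hq⟩ :=
    p.exists_prefix_deleteEdges hp (Set.mem_insert _ _) (by simp) hxy
  have hwYS : w ∈ insert y S := by
    rcases hw with rfl | hw
    · obtain ⟨s, hs, hsq⟩ := hx ha rfl q
      exact Set.mem_insert_of_mem _ (hq s hsq (by simp [hs]) ▸ hs)
    · exact hw
  obtain ⟨t, ht, htq⟩ := hT ha hwYS q
  exact ⟨t, ht, hqp htq⟩

end Separates

theorem separates_inter_of_edgeSet_eq_empty (hE : G.edgeSet = ∅) : G.Separates A B (A ∩ B) := by
  rintro a b ha hb (_ | ⟨hadj, _⟩)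
  · exact ⟨a, ⟨ha, hb⟩, Walk.start_mem_support _⟩
  · exact absurd (hE ▸ G.mem_edgeSet.2 hadj : _ ∈ (∅ : Set (Sym2 V))) (Set.notMem_empty _)

namespace HasDisjointPaths

theorem of_walks (a b : Fin k → V) (P : ∀ i, G.Walk (a i) (b i)) (ha : ∀ i, a i ∈ A)
    (hb : ∀ i, b i ∈ B) (hP : Pairwise fun i j => (P i).support.Disjoint (P j).support) :
    G.HasDisjointPaths A B k := by
  choose a' b' Q hQ hQP using fun i => (P i).exists_isPathBetween (ha i) (hb i)
  exact ⟨a', b', Q, hQ, fun i j hij => List.disjoint_of_subset_left (hQP i)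
    (List.disjoint_of_subset_right (hQP j) (hP hij))⟩

theorem mono (hGH : G ≤ H) (h : G.HasDisjointPaths A B k) : H.HasDisjointPaths A B k := by
  obtain ⟨a, b, P, hP, hPd⟩ := h
  exact of_walks a b (fun i => (P i).mapLe hGH) (fun i => (hP i).start_mem)
    (fun i => (hP i).end_mem) (by simpa [Walk.support_mapLe_eq_support] using hPd)

theorem of_le_ncard_inter [Finite V] (h : k ≤ (A ∩ B).ncard) : G.HasDisjointPaths A B k := by
  have := Fintype.ofFinite (A ∩ B : Set V)
  obtain ⟨f⟩ : Nonempty (Fin k ↪ (A ∩ B : Set V)) := Function.Embedding.nonempty_of_card_le <| by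
    simpa [← Nat.card_eq_fintype_card, Nat.card_coe_set_eq, Nat.card_fin] using h
  refine of_walks (fun i => f i) (fun i => f i) (fun _ => Walk.nil) (fun i => (f i).2.1)
    (fun i => (f i).2.2) fun i j hij => ?_
  simpa using fun h => hij (f.injective (Subtype.ext h)).symm

/-- The `k` paths on each side use every vertex of `Z`, so they can be matched up at `Z`. -/
theorem trans [Finite V] {Z : Set V} (hZ : G.Separates A B Z) (hZk : Z.ncard ≤ k)
    (h₁ : G.HasDisjointPaths A Z k) (h₂ : G.HasDisjointPaths Z B k) :
    G.HasDisjointPaths A B k := by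
  obtain ⟨a, z, P, hP, hPd⟩ := h₁
  obtain ⟨z', b, Q, hQ, hQd⟩ := h₂
  have hz' : Function.Bijective fun j => (⟨z' j, (hQ j).start_mem⟩ : Z) :=
    Function.Injective.bijective_of_nat_card_le
      (fun i j h => Walk.injective_start_of_pairwise_disjoint hQd (congrArg Subtype.val h))
      (by simpa [Nat.card_coe_set_eq] using hZk)
  choose σ hσ using fun i => (hz'.2 ⟨z i, (hP i).end_mem⟩).imp fun _ h => congrArg Subtype.val h
  have hσinj : Function.Injective σ := fun i j h =>
    Walk.injective_end_of_pairwise_disjoint hPd ((hσ i).symm.trans (h ▸ hσ j))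
  have hcross : ∀ i j w, w ∈ (P i).support → w ∈ (Q j).support → w = z i ∧ w = z' j :=
    fun i j w hwP hwQ =>
      have hwZ := hZ.mem_of_mem_support_of_mem_support (hP i) (hQ j) hwP hwQ
      ⟨(hP i).eq_end w hwP hwZ, (hQ j).eq_start w hwQ hwZ⟩
  refine of_walks a (fun i => b (σ i)) (fun i => (P i).append ((Q (σ i)).copy (hσ i) rfl))
    (fun i => (hP i).start_mem) (fun i => (hQ _).end_mem) fun i j hij w hwi hwj => ?_
  simp only [Walk.mem_support_append_iff, Walk.support_copy] at hwi hwj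
  rcases hwi with hwi | hwi <;> rcases hwj with hwj | hwj
  · exact hPd hij hwi hwj
  · obtain ⟨rfl, h⟩ := hcross i (σ j) w hwi hwj
    exact hij (Walk.injective_end_of_pairwise_disjoint hPd (h.trans (hσ j)))
  · obtain ⟨rfl, h⟩ := hcross j (σ i) w hwj hwi
    exact hij (Walk.injective_end_of_pairwise_disjoint hPd (h.trans (hσ i))).symm
  · exact hQd (hσinj.ne hij) hwi hwj

/-- Prefix the edge `yx` to the path starting at `x`; `hy` keeps `y` off all the paths. -/
theorem insert_start (hle : H ≤ G) (hyx : G.Adj y x) (hyS : y ∉ S) (hy : H.Separates {y} B S)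
    (h : H.HasDisjointPaths (insert x S) B k) : G.HasDisjointPaths (insert y S) B k := by
  classical
  obtain ⟨a, b, Q, hQ, hQd⟩ := h
  have hyQ : ∀ j, y ∉ (Q j).support := by
    intro j hyj
    have hyj' : y ∈ (Q j).reverse.support := by simpa using hyj
    obtain ⟨s, hsS, hs⟩ := hy rfl (hQ j).end_mem ((Q j).reverse.takeUntil y hyj').reverse
    refine (hQ j).isPath.reverse.notMem_of_mem_support_takeUntil (by simpa using (hQ j).eq_start)
      hyj' (by simp [hyx.ne, hyS]) s (by simpa using hs) (Set.mem_insert_of_mem _ hsS)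
  have hW : ∀ j, ∃ c ∈ insert y S, ∃ W : G.Walk c (b j),
      ∀ z ∈ W.support, z ∈ (Q j).support ∨ (z = y ∧ a j = x) := by
    intro j
    rcases (hQ j).start_mem with hx | hS
    · refine ⟨y, Set.mem_insert _ _, Walk.cons (hx ▸ hyx) ((Q j).mapLe hle), fun z hz => ?_⟩
      rw [Walk.support_cons, Walk.support_mapLe_eq_support, List.mem_cons] at hz
      exact hz.symm.imp_right fun h => ⟨h, hx⟩
    · exact ⟨a j, Set.mem_insert_of_mem _ hS, (Q j).mapLe hle,
        fun z hz => Or.inl (by rwa [Walk.support_mapLe_eq_support] at hz)⟩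
  choose c hc W hW using hW
  refine of_walks c b W hc (fun j => (hQ j).end_mem) fun i j hij z hzi hzj => ?_
  rcases hW i z hzi with hi | ⟨rfl, hi⟩ <;> rcases hW j z hzj with hj | ⟨hzy, hj⟩
  · exact hQd hij hi hj
  · exact hyQ i (hzy ▸ hi)
  · exact hyQ j hj
  · exact hij (Walk.injective_start_of_pairwise_disjoint hQd (hi.trans hj.symm))

end HasDisjointPaths

theorem hasDisjointPaths_of_separates_deleteEdges [Finite V] (hxy : G.Adj x y)
    (hG : ∀ T, G.Separates A B T → k ≤ T.ncard)
    (hS : (G.deleteEdges {s(x, y)}).Separates A B S) (hSk : S.ncard < k)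
    (hx : (G.deleteEdges {s(x, y)}).Separates A {x} S)
    (hy : (G.deleteEdges {s(x, y)}).Separates {y} B S)
    (ih : ∀ A' B' : Set V, (∀ T, (G.deleteEdges {s(x, y)}).Separates A' B' T → k ≤ T.ncard) →
      (G.deleteEdges {s(x, y)}).HasDisjointPaths A' B' k) :
    G.HasDisjointPaths A B k := by
  have hZ : G.Separates A B (insert y S) :=
    hS.of_deleteEdges hx hxy.ne fun _ _ _ hb p => ⟨_, hb, p.end_mem_support⟩
  have hyS : y ∉ S := fun hyS => by
    have := hG _ hZ
    rw [Set.insert_eq_of_mem hyS] at this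
    omega
  have hZk : (insert y S).ncard ≤ k := (Set.ncard_insert_le _ _).trans hSk
  have h₁ : (G.deleteEdges {s(x, y)}).HasDisjointPaths A (insert y S) k :=
    ih _ _ fun T hT => hG T (hS.of_deleteEdges hx hxy.ne hT)
  have h₂ : (G.deleteEdges {s(x, y)}).HasDisjointPaths (insert x S) B k := by
    refine ih _ _ fun T hT => hG T (Separates.symm ?_)
    rw [Sym2.eq_swap] at hS hy hT
    exact hS.symm.of_deleteEdges hy.symm hxy.ne.symm hT.symm
  exact (h₁.mono (deleteEdges_le _)).trans hZ hZk
    (h₂.insert_start (deleteEdges_le _) hxy.symm hyS hy)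

theorem hasDisjointPaths_of_forall_separates_le_ncard [Finite V]
    (h : ∀ S, G.Separates A B S → k ≤ S.ncard) : G.HasDisjointPaths A B k := by
  induction hn : G.edgeSet.ncard using Nat.strong_induction_on generalizing G A B with
  | _ n ih =>
  obtain hE | ⟨e, he⟩ := G.edgeSet.eq_empty_or_nonempty
  · exact .of_le_ncard_inter (h _ (separates_inter_of_edgeSet_eq_empty hE))
  induction e using Sym2.ind with | h x y =>
  have hxy : G.Adj x y := he
  have hlt : (G.deleteEdges {s(x, y)}).edgeSet.ncard < n := hn ▸ Set.ncard_lt_ncard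
    (by simpa [edgeSet_deleteEdges] using Set.sdiff_singleton_ssubset.2 he) G.edgeSet.toFinite
  have ih' := fun A' B' hAB => ih _ hlt (A := A') (B := B') hAB rfl
  by_cases hH : ∀ S, (G.deleteEdges {s(x, y)}).Separates A B S → k ≤ S.ncard
  · exact (ih' A B hH).mono (deleteEdges_le _)
  push Not at hH
  obtain ⟨S, hS, hSk⟩ := hH
  rcases hS.deleteEdges_orientation (fun hGS => (h S hGS).not_gt hSk) hxy.ne with
    ⟨hAx, hyB⟩ | ⟨hAy, hxB⟩
  · exact hasDisjointPaths_of_separates_deleteEdges hxy h hS hSk hAx hyB ih'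
  · rw [Sym2.eq_swap] at hS hAy hxB ih'
    exact hasDisjointPaths_of_separates_deleteEdges hxy.symm h hS hSk hAy hxB ih'

end SimpleGraph

namespace KConnected

variable {V : Type} [Fintype V] {G : SimpleGraph V} {k : ℕ}

theorem le_ncard_neighborSet (hG : KConnected k G) (x : V) : k ≤ (G.neighborSet x).ncard := by
  by_contra! hlt
  have hcompl : 1 < (G.neighborSet x)ᶜ.ncard := by
    have := Set.ncard_add_ncard_compl (G.neighborSet x)
    have := hG.1
    rw [Nat.card_eq_fintype_card] at *
    omega
  have : Nontrivial ↥(G.neighborSet x)ᶜ :=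
    Set.nontrivial_coe_sort.2 (Set.one_lt_ncard_iff_nontrivial.1 hcompl)
  obtain ⟨u, hu⟩ :=
    (hG.2 _ hlt).preconnected.exists_adj_of_nontrivial ⟨x, G.notMem_neighborSet_self⟩
  exact u.2 hu

theorem le_ncard_of_separates {A B S : Set V} (hG : KConnected k G) (hA : k ≤ A.ncard)
    (hB : k ≤ B.ncard) (hS : G.Separates A B S) : k ≤ S.ncard := by
  by_contra! hlt
  obtain ⟨a, ha, haS⟩ := Set.exists_mem_notMem_of_ncard_lt_ncard (hlt.trans_le hA)
  obtain ⟨b, hb, hbS⟩ := Set.exists_mem_notMem_of_ncard_lt_ncard (hlt.trans_le hB)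
  obtain ⟨q⟩ := (hG.2 S hlt).preconnected ⟨a, haS⟩ ⟨b, hbS⟩
  obtain ⟨s, hs, hsq⟩ := hS ha hb (q.map (Embedding.induce Sᶜ).toHom)
  replace hsq : s ∈ (q.map (Embedding.induce Sᶜ).toHom).support := hsq
  rw [Walk.support_map, List.mem_map] at hsq
  obtain ⟨c, -, rfl⟩ := hsq
  exact c.2 hs

end KConnected

/-- Fan Lemma: if `G` is `k`-connected, `x` a vertex, and `U ⊆ V(G) \ {x}` has size at least
`k`, then there is an `x,U`-fan of size `k`: `k` paths from `x` to distinct vertices of `U`,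
pairwise disjoint except at `x`, each meeting `U` only in its endpoint. -/
theorem fan_lemma {V : Type} [Fintype V] (G : SimpleGraph V) (k : ℕ)
    (hk : KConnected k G) (x : V) (U : Set V) (hxU : x ∉ U) (hU : k ≤ U.ncard) :
    ∃ (u : Fin k → V) (P : ∀ i, G.Walk x (u i)),
      Function.Injective u ∧
      (∀ i, u i ∈ U) ∧
      (∀ i, (P i).IsPath) ∧
      (∀ i, {v | v ∈ (P i).support} ∩ U = {u i}) ∧
      (∀ i j, i ≠ j → {v | v ∈ (P i).support} ∩ {v | v ∈ (P j).support} = {x}) := by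
  classical
  obtain ⟨a, b, P, hP, hPd⟩ := hasDisjointPaths_of_forall_separates_le_ncard fun S hS =>
    hk.le_ncard_of_separates (hk.le_ncard_neighborSet x) hU hS
  let F i := (Walk.cons (hP i).start_mem (P i)).bypass
  have hF : ∀ i, ∀ v ∈ (F i).support, v = x ∨ v ∈ (P i).support := fun i v hv =>
    List.mem_cons.1 ((Walk.cons (hP i).start_mem (P i)).support_bypass_subset_support hv)
  refine ⟨b, F, Walk.injective_end_of_pairwise_disjoint hPd, fun i => (hP i).end_mem,
    fun i => Walk.bypass_isPath _, fun i => ?_, fun i j hij => ?_⟩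
  · refine Set.eq_singleton_iff_unique_mem.2 ⟨⟨(F i).end_mem_support, (hP i).end_mem⟩, ?_⟩
    rintro v ⟨hv, hvU⟩
    rcases hF i v hv with rfl | hv
    · exact absurd hvU hxU
    · exact (hP i).eq_end v hv hvU
  · refine Set.eq_singleton_iff_unique_mem.2
      ⟨⟨(F i).start_mem_support, (F j).start_mem_support⟩, ?_⟩
    rintro v ⟨hvi, hvj⟩
    rcases hF i v hvi with rfl | hvi
    · rfl
    rcases hF j v hvj with rfl | hvj
    · rfl
    exact absurd hvj (hPd hij hvi)
end

section
/- If a graph G has chromatic number at least 4, then G has K_4 as a minor. -/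
open SimpleGraph

/-!
A graph without a `K₄` minor has a vertex of degree at most two (Dirac), so it is 3-colourable
by deleting such a vertex and colouring greedily.

For Dirac's lemma one proves more, by induction on the number of vertices: if some vertex has
degree at least three and the vertices of degree at most two are pairwise adjacent, then `G` has
a `K₄` minor. On at most four vertices `G` is `K₄`. If `G` is triangle-free, contract any edge
`uv`: as `u` and `v` have no common neighbour no degree drops, the merged vertex has degree
`deg u + deg v - 2`, and three vertices of degree at most two would form a triangle, so the
hypothesis survives. If `G` has a triangle `T`, look at the components of `G - T`; one adjacent
to all three vertices of `T` yields a `K₄` minor. A component `R` without vertices of degree at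
most two that misses some `t ∈ T` leaves the smaller graph `G[R ∪ T \ {t}]`, which satisfies the
hypothesis. Otherwise every component contains a low-degree vertex; these are pairwise adjacent,
so `G - T` is connected, and a vertex of `T` without neighbours in it would have degree at most
two, so it would be adjacent to them after all.
-/

local notation "K₄" => (⊤ : SimpleGraph (Fin 4))

namespace SimpleGraph

variable {V V' : Type} {G : SimpleGraph V} {G' : SimpleGraph V'}

lemma connected_induce_singleton (G : SimpleGraph V) (x : V) : (G.induce {x}).Connected :=
  ⟨Preconnected.of_subsingleton⟩

lemma Connected.induce_image {s : Set V} (hs : (G.induce s).Connected) (φ : G →g G') :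
    (G'.induce (φ '' s)).Connected :=
  let ψ : G.induce s →g G'.induce (φ '' s) := ⟨fun x => ⟨φ x, x, x.2, rfl⟩, φ.map_rel⟩
  hs.map ψ (by rintro ⟨_, x, hx, rfl⟩; exact ⟨⟨x, hx⟩, rfl⟩)

def contractFibers (G : SimpleGraph V) (f : V → V') : SimpleGraph V' :=
  fromRel fun a b => ∃ x y, f x = a ∧ f y = b ∧ G.Adj x y

variable {f : V → V'}

lemma contractFibers_adj {a b : V'} :
    (G.contractFibers f).Adj a b ↔ a ≠ b ∧ ∃ x y, f x = a ∧ f y = b ∧ G.Adj x y := by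
  refine (fromRel_adj _ a b).trans (and_congr_right fun _ => or_iff_left_of_imp ?_)
  rintro ⟨x, y, rfl, rfl, h⟩
  exact ⟨y, x, rfl, rfl, h.symm⟩

lemma Adj.contractFibers {x y : V} (h : G.Adj x y) (hxy : f x ≠ f y) :
    (G.contractFibers f).Adj (f x) (f y) :=
  contractFibers_adj.2 ⟨hxy, x, y, rfl, rfl, h⟩

lemma Connected.induce_preimage (hf : ∀ a, (G.induce (f ⁻¹' {a})).Connected) {s : Set V'}
    (hs : ((G.contractFibers f).induce s).Connected) : (G.induce (f ⁻¹' s)).Connected := by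
  set K := G.induce (f ⁻¹' s)
  have fibre : ∀ x y : f ⁻¹' s, f x = f y → K.Reachable x y := by
    rintro ⟨x, hx⟩ ⟨y, hy⟩ hxy
    have hsub : f ⁻¹' {f x} ⊆ f ⁻¹' s := fun z hz => show f z ∈ s from hz ▸ hx
    exact ((hf (f x)).preconnected ⟨x, rfl⟩ ⟨y, hxy.symm⟩).map (G.induceHomOfLE hsub).toHom
  have edge : ∀ x y : f ⁻¹' s, (G.contractFibers f).Adj (f x) (f y) → K.Reachable x y := by
    intro x y hxy
    obtain ⟨-, x', y', hx', hy', h⟩ := contractFibers_adj.1 hxy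
    let x'' : f ⁻¹' s := ⟨x', show f x' ∈ s from hx' ▸ x.2⟩
    let y'' : f ⁻¹' s := ⟨y', show f y' ∈ s from hy' ▸ y.2⟩
    exact (fibre x x'' hx'.symm).trans ((Adj.reachable (G := K) (u := x'') (v := y'') h).trans
      (fibre y'' y hy'))
  have walk : ∀ (a b : s) (p : ((G.contractFibers f).induce s).Walk a b) (x y : f ⁻¹' s),
      f x = a → f y = b → K.Reachable x y := by
    intro a b p
    induction p with
    | nil => exact fun x y hx hy => fibre x y (hx.trans hy.symm)
    | @cons a m b h p ih =>
      intro x y hx hy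
      obtain ⟨z, hz⟩ := (hf m).nonempty
      let z' : f ⁻¹' s := ⟨z, show f z ∈ s from hz ▸ m.2⟩
      have hz' : f z' = m := hz
      exact (edge x z' (by rw [hx, hz']; exact h)).trans (ih z' y hz' hy)
  obtain ⟨⟨a, ha⟩⟩ := hs.nonempty
  obtain ⟨⟨x, hx⟩⟩ := (hf a).nonempty
  have : Nonempty (f ⁻¹' s) := ⟨⟨x, show f x ∈ s from hx ▸ ha⟩⟩
  refine ⟨fun x y => ?_⟩
  obtain ⟨p⟩ := hs.preconnected ⟨f x, x.2⟩ ⟨f y, y.2⟩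
  exact walk _ _ p x y rfl rfl

end SimpleGraph

section Minor

variable {V V' W : Type} {H : SimpleGraph W} {G : SimpleGraph V} {G' : SimpleGraph V'}

lemma IsMinor.refl (G : SimpleGraph V) : IsMinor G G :=
  ⟨fun x => {x}, fun _ => Set.singleton_nonempty _, fun _ _ h => Set.disjoint_singleton.2 h,
    G.connected_induce_singleton, fun i j h => ⟨i, rfl, j, rfl, h⟩⟩

lemma IsMinor.map (h : IsMinor H G) (φ : G →g G') (hφ : Function.Injective φ) :
    IsMinor H G' := by
  obtain ⟨B, hne, hdisj, hconn, hadj⟩ := h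
  refine ⟨fun i => φ '' B i, fun i => (hne i).image φ,
    fun i j hij => (Set.disjoint_image_iff hφ).2 (hdisj hij), fun i => (hconn i).induce_image φ,
    fun i j hij => ?_⟩
  obtain ⟨x, hx, y, hy, hxy⟩ := hadj i j hij
  exact ⟨φ x, ⟨x, hx, rfl⟩, φ y, ⟨y, hy, rfl⟩, φ.map_rel hxy⟩

lemma IsMinor.of_induce {s : Set V} (h : IsMinor H (G.induce s)) : IsMinor H G :=
  h.map (Embedding.induce s).toHom Subtype.val_injective

lemma IsMinor.of_contractFibers {f : V → V'} (hf : ∀ a, (G.induce (f ⁻¹' {a})).Connected)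
    (h : IsMinor H (G.contractFibers f)) : IsMinor H G := by
  obtain ⟨B, hne, hdisj, hconn, hadj⟩ := h
  refine ⟨fun i => f ⁻¹' B i, fun i => ?_, fun i j hij => (hdisj hij).preimage f,
    fun i => (hconn i).induce_preimage hf, fun i j hij => ?_⟩
  · obtain ⟨a, ha⟩ := hne i
    obtain ⟨⟨x, hx⟩⟩ := (hf a).nonempty
    exact ⟨x, show f x ∈ B i from hx ▸ ha⟩
  · obtain ⟨a, ha, b, hb, hab⟩ := hadj i j hij
    obtain ⟨-, x, y, rfl, rfl, hxy⟩ := contractFibers_adj.1 hab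
    exact ⟨x, ha, y, hb, hxy⟩

lemma isMinor_K4_of_triangle {a b c : V} {R : Set V} (hab : G.Adj a b) (hac : G.Adj a c)
    (hbc : G.Adj b c) (hR : (G.induce R).Connected) (hRT : Disjoint R {a, b, c})
    (hRadj : ∀ t ∈ ({a, b, c} : Set V), ∃ x ∈ R, G.Adj t x) : IsMinor K₄ G := by
  have ha : a ∉ R := fun h => Set.disjoint_left.1 hRT h (by simp)
  have hb : b ∉ R := fun h => Set.disjoint_left.1 hRT h (by simp)
  have hc : c ∉ R := fun h => Set.disjoint_left.1 hRT h (by simp)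
  obtain ⟨xa, hxa, ha'⟩ := hRadj a (by simp)
  obtain ⟨xb, hxb, hb'⟩ := hRadj b (by simp)
  obtain ⟨xc, hxc, hc'⟩ := hRadj c (by simp)
  refine ⟨![{a}, {b}, {c}, R], fun i => ?_, fun i j hij => ?_, fun i => ?_, fun i j hij => ?_⟩
  · fin_cases i <;> first | exact ⟨xa, hxa⟩ | simp
  · fin_cases i <;> fin_cases j <;> simp_all [hab.ne, hac.ne, hbc.ne, hab.ne', hac.ne', hbc.ne']
  · fin_cases i <;> simp [hR]
  · fin_cases i <;> fin_cases j <;> simp_all [hab.symm, hac.symm, hbc.symm]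
    exacts [⟨xa, hxa, ha'.symm⟩, ⟨xb, hxb, hb'.symm⟩, ⟨xc, hxc, hc'.symm⟩]

end Minor

namespace SimpleGraph

variable {V V' : Type} {G : SimpleGraph V}

lemma ncard_le_ncard_neighborSet_contractFibers [Finite V'] {f : V → V'} {A : Set V} {a : V'}
    (hA : ∀ y ∈ A, f y ≠ a ∧ ∃ x, f x = a ∧ G.Adj x y) (hinj : Set.InjOn f A) :
    A.ncard ≤ ((G.contractFibers f).neighborSet a).ncard := by
  refine Set.ncard_le_ncard_of_injOn f (fun y hy => ?_) hinj
  obtain ⟨hya, x, rfl, hxy⟩ := hA y hy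
  exact hxy.contractFibers hya.symm

variable {u v : V}

open Classical in
noncomputable def mergeVertex (huv : u ≠ v) (x : V) : {x : V // x ≠ v} :=
  if h : x = v then ⟨u, huv⟩ else ⟨x, h⟩

lemma mergeVertex_of_ne (huv : u ≠ v) {x : V} (hx : x ≠ v) : mergeVertex huv x = ⟨x, hx⟩ :=
  dif_neg hx

lemma mergeVertex_eq_mergeVertex_iff (huv : u ≠ v) {x y : V} :
    mergeVertex huv x = mergeVertex huv y ↔ x = y ∨ (x = u ∨ x = v) ∧ (y = u ∨ y = v) := by
  unfold mergeVertex
  split_ifs <;> simp only [Subtype.mk.injEq] <;> grind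

lemma connected_induce_preimage_mergeVertex (huv : G.Adj u v) (a : {x : V // x ≠ v}) :
    (G.induce (mergeVertex huv.ne ⁻¹' {a})).Connected := by
  obtain ⟨a, hav⟩ := a
  have hfibre : ∀ x, x ∈ mergeVertex huv.ne ⁻¹' {⟨a, hav⟩} ↔ x = a ∨ a = u ∧ (x = u ∨ x = v) := by
    intro x
    rw [Set.mem_preimage, Set.mem_singleton_iff, ← mergeVertex_of_ne huv.ne hav,
      mergeVertex_eq_mergeVertex_iff]
    grind
  by_cases ha : a = u
  · rw [show mergeVertex huv.ne ⁻¹' {⟨a, hav⟩} = {u, v} by ext x; rw [hfibre]; simp [ha]]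
    exact induce_pair_connected_of_adj huv
  · rw [show mergeVertex huv.ne ⁻¹' {⟨a, hav⟩} = {a} by ext x; rw [hfibre]; simp [ha]]
    exact connected_induce_singleton G a

lemma ncard_neighborSet_le_mergeVertex [Finite V] (huv : u ≠ v) {x : V} (hxu : x ≠ u)
    (hxv : x ≠ v) (hx : ¬(G.Adj x u ∧ G.Adj x v)) :
    (G.neighborSet x).ncard ≤
      ((G.contractFibers (mergeVertex huv)).neighborSet (mergeVertex huv x)).ncard := by
  refine ncard_le_ncard_neighborSet_contractFibers (fun y hy => ⟨?_, x, rfl, hy⟩) ?_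
  · rw [Ne, mergeVertex_eq_mergeVertex_iff]
    have : G.Adj x y := hy
    grind [G.ne_of_adj this]
  · intro y hy z hz hyz
    rw [mergeVertex_eq_mergeVertex_iff] at hyz
    have : G.Adj x y ∧ G.Adj x z := ⟨hy, hz⟩
    grind

lemma ncard_neighborSet_add_ncard_neighborSet_le_mergeVertex [Finite V] (huv : G.Adj u v)
    (hcommon : ∀ x, ¬(G.Adj x u ∧ G.Adj x v)) :
    (G.neighborSet u).ncard + (G.neighborSet v).ncard ≤
      ((G.contractFibers (mergeVertex huv.ne)).neighborSet (mergeVertex huv.ne u)).ncard + 2 := by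
  set A := (G.neighborSet u ∪ G.neighborSet v) \ {u, v}
  have hunion : (G.neighborSet u ∪ G.neighborSet v).ncard =
      (G.neighborSet u).ncard + (G.neighborSet v).ncard :=
    Set.ncard_union_eq (Set.disjoint_left.2 fun x hxu hxv => hcommon x ⟨hxu.symm, hxv.symm⟩)
  have hA : A.ncard + 2 = (G.neighborSet u ∪ G.neighborSet v).ncard := by
    rw [← Set.ncard_pair huv.ne]
    refine Set.ncard_sdiff_add_ncard_of_subset ?_
    rintro x (rfl | rfl)
    exacts [Or.inr huv.symm, Or.inl huv]
  have hle : A.ncard ≤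
      ((G.contractFibers (mergeVertex huv.ne)).neighborSet (mergeVertex huv.ne u)).ncard := by
    refine ncard_le_ncard_neighborSet_contractFibers (fun y hy => ⟨?_, ?_⟩) ?_
    · rw [Ne, mergeVertex_eq_mergeVertex_iff]
      grind
    · obtain ⟨hy | hy, -⟩ := hy
      · exact ⟨u, rfl, hy⟩
      · exact ⟨v, (mergeVertex_eq_mergeVertex_iff huv.ne).2 (by simp), hy⟩
    · intro y hy z hz hyz
      rw [mergeVertex_eq_mergeVertex_iff] at hyz
      grind
  omega

/-- Minimum degree at least three, relaxed to "the vertices of degree at most two form a clique"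
so that it survives passing to the smaller graphs of the induction. -/
def IsAdmissible (G : SimpleGraph V) : Prop :=
  (∃ w, 3 ≤ (G.neighborSet w).ncard) ∧ G.IsClique {x | (G.neighborSet x).ncard < 3}

lemma exists_ne_ne_three_le_ncard_of_cliqueFree [Finite V]
    (hlow : G.IsClique {x | (G.neighborSet x).ncard < 3}) (h3 : G.CliqueFree 3)
    (h5 : 5 ≤ Nat.card V) (u v : V) : ∃ w, w ≠ u ∧ w ≠ v ∧ 3 ≤ (G.neighborSet w).ncard := by
  have : 2 < ({u, v}ᶜ : Set V).ncard := by
    have := Set.ncard_add_ncard_compl ({u, v} : Set V)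
    have := Set.ncard_insert_le u {v}
    rw [Set.ncard_singleton] at *
    omega
  obtain ⟨x, y, z, hx, hy, hz, hxy, hxz, hyz⟩ := (Set.two_lt_ncard_iff (Set.toFinite _)).1 this
  classical
  by_contra! h
  simp only [Set.mem_compl_iff, Set.mem_insert_iff, Set.mem_singleton_iff, not_or] at hx hy hz
  have hx' := h x hx.1 hx.2
  have hy' := h y hy.1 hy.2
  have hz' := h z hz.1 hz.2
  exact h3 {x, y, z} (is3Clique_triple_iff.2 ⟨hlow hx' hy' hxy, hlow hx' hz' hxz, hlow hy' hz' hyz⟩)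

theorem IsAdmissible.contractFibers_mergeVertex [Finite V] (hG : G.IsAdmissible)
    (h3 : G.CliqueFree 3) (h5 : 5 ≤ Nat.card V) (huv : G.Adj u v) :
    (G.contractFibers (mergeVertex huv.ne)).IsAdmissible := by
  classical
  have hcommon : ∀ x, ¬(G.Adj x u ∧ G.Adj x v) := fun x hx =>
    h3 {x, u, v} (is3Clique_triple_iff.2 ⟨hx.1, hx.2, huv⟩)
  have hlow : ∀ a, ((G.contractFibers (mergeVertex huv.ne)).neighborSet a).ncard < 3 →
      ∃ x, mergeVertex huv.ne x = a ∧ (G.neighborSet x).ncard < 3 := by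
    intro a ha
    by_cases hau : a.1 = u
    · have hfu : mergeVertex huv.ne u = a := by
        rw [mergeVertex_of_ne huv.ne huv.ne]; exact Subtype.ext hau.symm
      have hfv : mergeVertex huv.ne v = a :=
        ((mergeVertex_eq_mergeVertex_iff huv.ne).2 (by simp)).symm.trans hfu
      have := ncard_neighborSet_add_ncard_neighborSet_le_mergeVertex huv hcommon
      rw [hfu] at this
      by_cases hu : (G.neighborSet u).ncard < 3
      exacts [⟨u, hfu, hu⟩, ⟨v, hfv, by omega⟩]
    · have := ncard_neighborSet_le_mergeVertex huv.ne hau a.2 (hcommon a)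
      rw [mergeVertex_of_ne huv.ne a.2] at this
      exact ⟨a, mergeVertex_of_ne huv.ne a.2, this.trans_lt ha⟩
  obtain ⟨w, hwu, hwv, hw⟩ := exists_ne_ne_three_le_ncard_of_cliqueFree hG.2 h3 h5 u v
  refine ⟨⟨_, hw.trans (ncard_neighborSet_le_mergeVertex huv.ne hwu hwv (hcommon w))⟩,
    fun a ha b hb hab => ?_⟩
  obtain ⟨x, rfl, hx⟩ := hlow a ha
  obtain ⟨y, rfl, hy⟩ := hlow b hb
  exact (hG.2 hx hy fun h => hab (h ▸ rfl)).contractFibers hab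

lemma IsAdmissible.isMinor_K4_of_card_le_four [Finite V] (hG : G.IsAdmissible)
    (h4 : Nat.card V ≤ 4) : IsMinor K₄ G := by
  have hcompl : ∀ x, ({x}ᶜ : Set V).ncard + 1 = Nat.card V := fun x => by
    rw [← Set.ncard_singleton x, add_comm, Set.ncard_add_ncard_compl]
  have hfull : ∀ x, 3 ≤ (G.neighborSet x).ncard → G.neighborSet x = {x}ᶜ := fun x hx =>
    Set.eq_of_subset_of_ncard_le (fun y hy => (G.ne_of_adj hy).symm) (by have := hcompl x; omega)
  obtain ⟨w, hw⟩ := hG.1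
  have hcard : Nat.card V = 4 := by
    have := hcompl w
    rw [← hfull w hw] at this
    omega
  have hadj : ∀ x y, x ≠ y → G.Adj x y := by
    intro x y hxy
    by_cases hx : 3 ≤ (G.neighborSet x).ncard
    · show y ∈ G.neighborSet x
      rw [hfull x hx]
      exact hxy.symm
    by_cases hy : 3 ≤ (G.neighborSet y).ncard
    · have : x ∈ G.neighborSet y := by rw [hfull y hy]; exact hxy
      exact this.symm
    exact hG.2 (not_le.1 hx) (not_le.1 hy) hxy
  let e := (Finite.equivFinOfCardEq hcard).symm
  exact (IsMinor.refl K₄).map ⟨e, fun hij => hadj _ _ (e.injective.ne hij)⟩ e.injective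

lemma ncard_neighborSet_induce_of_subset {U : Set V} {x : U} (h : G.neighborSet x ⊆ U) :
    ((G.induce U).neighborSet x).ncard = (G.neighborSet x).ncard := by
  rw [neighborSet_induce, Set.ncard_preimage_of_injective_subset_range Subtype.val_injective
    (by rwa [Subtype.range_coe])]

lemma isAdmissible_induce_of_isClique {U T : Set V} (hT : G.IsClique T)
    (hfull : ∀ x ∈ U, x ∉ T → G.neighborSet x ⊆ U ∧ 3 ≤ (G.neighborSet x).ncard)
    (hex : ∃ x ∈ U, x ∉ T) : (G.induce U).IsAdmissible := by
  have hdeg : ∀ x : U, x.1 ∉ T → 3 ≤ ((G.induce U).neighborSet x).ncard := fun x hx => by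
    rw [ncard_neighborSet_induce_of_subset (hfull x x.2 hx).1]
    exact (hfull x x.2 hx).2
  obtain ⟨x, hxU, hxT⟩ := hex
  refine ⟨⟨⟨x, hxU⟩, hdeg _ hxT⟩, fun y hy z hz hyz => ?_⟩
  have hyT : y.1 ∈ T := by_contra fun h => (hdeg y h).not_gt hy
  have hzT : z.1 ∈ T := by_contra fun h => (hdeg z h).not_gt hz
  exact hT hyT hzT (Subtype.coe_ne_coe.2 hyz)

lemma isClique_triple {a b c : V} (hab : G.Adj a b) (hac : G.Adj a c) (hbc : G.Adj b c) :
    G.IsClique {a, b, c} := by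
  classical
  simpa using (is3Clique_triple_iff.2 ⟨hab, hac, hbc⟩).isClique

lemma isAdmissible_induce_supp_union {T : Set V} (hT : G.IsClique T)
    {C : (G.induce Tᶜ).ConnectedComponent} (hC : ∀ x ∈ C.supp, 3 ≤ (G.neighborSet x).ncard)
    {t : V} (ht : ∀ x ∈ C.supp, ¬G.Adj t x) :
    (G.induce (Subtype.val '' C.supp ∪ (T \ {t}))).IsAdmissible := by
  obtain ⟨r, hr⟩ := C.nonempty_supp
  refine isAdmissible_induce_of_isClique (T := T \ {t}) (hT.subset Set.sdiff_subset) ?_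
    ⟨r, .inl ⟨r, hr, rfl⟩, fun h => r.2 h.1⟩
  rintro _ (⟨x, hx, rfl⟩ | hx) hxT
  · refine ⟨fun y hy => ?_, hC x hx⟩
    by_cases hyT : y ∈ T
    · exact .inr ⟨hyT, fun hyt => ht x hx (hyt ▸ hy.symm)⟩
    · exact .inl ⟨⟨y, hyT⟩, C.mem_supp_of_adj_mem_supp hx hy, rfl⟩
  · exact absurd hx hxT

lemma forall_exists_adj_of_forall_exists_ncard_neighborSet_lt [Finite V]
    (hlow : G.IsClique {x | (G.neighborSet x).ncard < 3}) {T : Set V} (hT : T.ncard ≤ 3)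
    (hC : ∀ C : (G.induce Tᶜ).ConnectedComponent, ∃ x ∈ C.supp, (G.neighborSet x).ncard < 3)
    (C : (G.induce Tᶜ).ConnectedComponent) : ∀ t ∈ T, ∃ x ∈ C.supp, G.Adj t x := by
  obtain ⟨d, hdC, hd⟩ := hC C
  have hall : ∀ y : ↥Tᶜ, y ∈ C.supp := by
    intro y
    obtain ⟨d', hd'C, hd'⟩ := hC ((G.induce Tᶜ).connectedComponentMk y)
    rw [ConnectedComponent.mem_supp_iff] at hdC hd'C ⊢
    rw [← hdC, ← hd'C]
    by_cases hdd : d' = d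
    · rw [hdd]
    · exact ConnectedComponent.connectedComponentMk_eq_of_adj
        (show G.Adj d' d from hlow hd' hd (Subtype.coe_ne_coe.2 hdd))
  intro t htT
  by_contra! ht
  have hsub : G.neighborSet t ⊆ T \ {t} := fun y hy =>
    ⟨by_contra fun hyT => ht ⟨y, hyT⟩ (hall _) hy, fun hyt => G.loopless.irrefl _ (hyt ▸ hy)⟩
  have htlow : (G.neighborSet t).ncard < 3 := by
    grw [Set.ncard_le_ncard hsub, Set.ncard_sdiff_singleton_of_mem htT]
    omega
  exact ht d hdC (hlow htlow hd fun h => d.2 (h ▸ htT))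

theorem IsAdmissible.isMinor_K4_or_exists_induce_of_triangle [Finite V] (hG : G.IsAdmissible)
    {a b c : V} (hab : G.Adj a b) (hac : G.Adj a c) (hbc : G.Adj b c) (h4 : 3 < Nat.card V) :
    IsMinor K₄ G ∨ ∃ U : Set V, Uᶜ.Nonempty ∧ (G.induce U).IsAdmissible := by
  set T : Set V := {a, b, c}
  have hT : T.ncard ≤ 3 := (Set.ncard_insert_le _ _).trans <| by
    grw [Set.ncard_insert_le, Set.ncard_singleton]
  have hK4 : ∀ C : (G.induce Tᶜ).ConnectedComponent, (∀ t ∈ T, ∃ x ∈ C.supp, G.Adj t x) →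
      IsMinor K₄ G := by
    refine fun C hC => isMinor_K4_of_triangle hab hac hbc (R := Subtype.val '' C.supp)
      (C.connected_toSimpleGraph.induce_image (Embedding.induce Tᶜ).toHom)
      (Set.disjoint_left.2 fun _ ⟨x, _, hx⟩ => hx ▸ x.2) fun t ht => ?_
    obtain ⟨x, hx, htx⟩ := hC t ht
    exact ⟨x, ⟨x, hx, rfl⟩, htx⟩
  by_cases hB : ∃ C : (G.induce Tᶜ).ConnectedComponent, ∀ x ∈ C.supp, 3 ≤ (G.neighborSet x).ncard
  · obtain ⟨C, hC⟩ := hB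
    by_cases hCT : ∀ t ∈ T, ∃ x ∈ C.supp, G.Adj t x
    · exact .inl (hK4 C hCT)
    push Not at hCT
    obtain ⟨t, htT, ht⟩ := hCT
    have htU : t ∉ Subtype.val '' C.supp ∪ (T \ {t}) := fun h =>
      h.elim (fun ⟨x, _, hx⟩ => x.2 (hx ▸ htT)) fun h => h.2 rfl
    exact .inr ⟨_, ⟨t, htU⟩, isAdmissible_induce_supp_union (isClique_triple hab hac hbc) hC ht⟩
  · push Not at hB
    obtain ⟨s, hs⟩ : Tᶜ.Nonempty := by
      have := Set.ncard_add_ncard_compl T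
      exact Set.nonempty_of_ncard_ne_zero (by omega)
    exact .inl (hK4 _ (forall_exists_adj_of_forall_exists_ncard_neighborSet_lt hG.2 hT hB
      ((G.induce Tᶜ).connectedComponentMk ⟨s, hs⟩)))

theorem IsAdmissible.isMinor_K4 [Finite V] (hG : G.IsAdmissible) : IsMinor K₄ G := by
  induction hn : Nat.card V using Nat.strong_induction_on generalizing V with
  | _ n ih =>
  subst hn
  obtain h4 | h5 := le_or_gt (Nat.card V) 4
  · exact hG.isMinor_K4_of_card_le_four h4
  by_cases h3 : G.CliqueFree 3
  · obtain ⟨w, hw⟩ := hG.1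
    obtain ⟨v, hv⟩ := Set.nonempty_of_ncard_ne_zero (s := G.neighborSet w) (by omega)
    exact (ih _ (Finite.card_subtype_lt (not_not.2 rfl)) (hG.contractFibers_mergeVertex h3 h5 hv)
      rfl).of_contractFibers (connected_induce_preimage_mergeVertex hv)
  · classical
    obtain ⟨s, hs⟩ := not_forall_not.1 h3
    obtain ⟨a, b, c, hab, hac, hbc, -⟩ := is3Clique_iff.1 hs
    rcases hG.isMinor_K4_or_exists_induce_of_triangle hab hac hbc (by omega)
      with h | ⟨U, ⟨t, ht⟩, hU⟩
    · exact h
    · exact (ih _ (Finite.card_subtype_lt ht) hU rfl).of_induce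

lemma Colorable.of_induce_compl_singleton {n : ℕ} {v : V} (h : (G.induce {v}ᶜ).Colorable n)
    (hv : (G.neighborSet v).ncard < n) (hfin : (G.neighborSet v).Finite) : G.Colorable n := by
  classical
  obtain ⟨C⟩ := h
  have : NeZero n := ⟨by omega⟩
  let C' : V → Fin n := fun y => if hy : y = v then 0 else C ⟨y, hy⟩
  obtain ⟨c, -, hc⟩ : ∃ c ∈ Set.univ, c ∉ C' '' G.neighborSet v := by
    refine Set.exists_mem_notMem_of_ncard_lt_ncard ((Set.ncard_image_le hfin).trans_lt ?_)
    rwa [Set.ncard_univ, Nat.card_eq_fintype_card, Fintype.card_fin]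
  have hcv : ∀ y, G.Adj v y → C' y ≠ c := fun y hy hyc => hc ⟨y, hy, hyc⟩
  refine ⟨Coloring.mk (fun y => if y = v then c else C' y) fun {x y} hxy => ?_⟩
  by_cases hx : x = v <;> by_cases hy : y = v
  · exact absurd (hx.trans hy.symm) hxy.ne
  · simpa [hx, hy] using (hcv y (hx ▸ hxy)).symm
  · simpa [hx, hy] using hcv x (hy ▸ hxy.symm)
  · simpa [hx, hy, C'] using C.valid (show (G.induce {v}ᶜ).Adj ⟨x, hx⟩ ⟨y, hy⟩ from hxy)

theorem colorable_three_of_not_isMinor_K4 [Finite V] (h : ¬IsMinor K₄ G) : G.Colorable 3 := by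
  induction hn : Nat.card V using Nat.strong_induction_on generalizing V with
  | _ n ih =>
  subst hn
  by_cases hlow : ∃ v, (G.neighborSet v).ncard < 3
  · obtain ⟨v, hv⟩ := hlow
    refine Colorable.of_induce_compl_singleton ?_ hv (Set.toFinite _)
    exact ih _ (Finite.card_subtype_lt (x := v) (by simp)) (fun hm => h hm.of_induce) rfl
  push Not at hlow
  cases isEmpty_or_nonempty V with
  | inl _ => exact Colorable.of_isEmpty 3
  | inr hV =>
    obtain ⟨w⟩ := hV
    exact (h (IsAdmissible.isMinor_K4 ⟨⟨w, hlow w⟩, fun x hx => ((hlow x).not_gt hx).elim⟩)).elim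

end SimpleGraph

theorem k4_minor_of_chromaticNumber_general {V : Type} [Fintype V]
    (G : SimpleGraph V) (h : 4 ≤ G.chromaticNumber) :
    IsMinor (⊤ : SimpleGraph (Fin 4)) G := by
  by_contra hG
  have := h.trans (SimpleGraph.colorable_three_of_not_isMinor_K4 hG).chromaticNumber_le
  norm_num at this

/-- If `χ(G) ≥ 4`, then `G` has `K₄` as a minor. -/
theorem k4_minor_of_chromaticNumber {V : Type} [Fintype V] [Nonempty V]
    (G : SimpleGraph V) (h : 4 ≤ G.chromaticNumber) :
    IsMinor (⊤ : SimpleGraph (Fin 4)) G :=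
  k4_minor_of_chromaticNumber_general G h
end

section
/- Let G be a connected graph and x a vertex of G. Then there exists d ≥ 0 such that the induced subgraph G[S_d(x)] satisfies χ(G[S_d(x)]) ≥ χ(G)/2, i.e., 2·χ(G[S_d(x)]) ≥ χ(G). -/
open SimpleGraph

/-!
Colour every distance layer `S_d(x)` properly with the same `k = max_d χ(G[S_d(x)])` colours,
and add the parity of `d` as a second coordinate. An edge of `G` joins either two vertices of
one layer, which get different layer colours, or two vertices of consecutive layers, which get
different parities; so `χ(G) ≤ 2k`.
-/

namespace SimpleGraph

variable {V α : Type*} {G : SimpleGraph V} {f : V → ℕ}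

def Coloring.ofLayers (hf : ∀ ⦃u v⦄, G.Adj u v → f u ≤ f v + 1)
    (C : ∀ d, (G.induce {v | f v = d}).Coloring α) : G.Coloring (Fin 2 × α) :=
  .mk (fun v => (⟨f v % 2, Nat.mod_lt _ two_pos⟩, C (f v) ⟨v, rfl⟩)) fun {u v} huv heq => by
    have layer_ne : ∀ d e, d = e → ∀ hu hv, C d ⟨u, hu⟩ ≠ C e ⟨v, hv⟩ := by
      rintro d _ rfl hu hv
      exact (C d).valid huv
    obtain ⟨hpar, hcol⟩ := Prod.mk.inj heq
    have hpar : f u % 2 = f v % 2 := Fin.mk.inj hpar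
    have := hf huv
    have := hf huv.symm
    exact layer_ne _ _ (by omega) rfl rfl hcol

theorem Colorable.of_layers (hf : ∀ ⦃u v⦄, G.Adj u v → f u ≤ f v + 1) {k : ℕ}
    (h : ∀ d, (G.induce {v | f v = d}).Colorable k) : G.Colorable (2 * k) := by
  simpa using (Coloring.ofLayers hf fun d => (h d).some).colorable

theorem chromaticNumber_le_two_mul_of_layers (hf : ∀ ⦃u v⦄, G.Adj u v → f u ≤ f v + 1)
    {n : ℕ∞} (h : ∀ d, (G.induce {v | f v = d}).chromaticNumber ≤ n) :
    G.chromaticNumber ≤ 2 * n := by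
  induction n using ENat.recTopCoe with
  | top => simp
  | coe k =>
    exact_mod_cast (Colorable.of_layers hf fun d =>
      chromaticNumber_le_iff_colorable.mp (h d)).chromaticNumber_le

theorem exists_forall_chromaticNumber_induce_fiber_le [Finite V] [Nonempty V] (f : V → ℕ) :
    ∃ d, ∀ e, (G.induce {v | f v = e}).chromaticNumber ≤
      (G.induce {v | f v = d}).chromaticNumber := by
  obtain ⟨v₀, hv₀⟩ := Finite.exists_max fun v => (G.induce {w | f w = f v}).chromaticNumber
  refine ⟨f v₀, fun e => ?_⟩
  by_cases he : ∃ v, f v = e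
  · obtain ⟨v, rfl⟩ := he
    exact hv₀ v
  · have : IsEmpty {v | f v = e} := ⟨fun ⟨v, hv⟩ => he ⟨v, hv⟩⟩
    simp [chromaticNumber_eq_zero_of_isEmpty]

theorem Adj.dist_le_dist_add_one {u v : V} (huv : G.Adj u v) (x : V) :
    G.dist x u ≤ G.dist x v + 1 := by
  have := huv.symm.diff_dist_adj (u := x)
  omega

end SimpleGraph

theorem exists_layer_large_chromaticNumber_general {V : Type} [Fintype V] [Nonempty V]
    (G : SimpleGraph V) (x : V) :
    ∃ d : ℕ, G.chromaticNumber ≤ 2 * (G.induce {y : V | G.dist x y = d}).chromaticNumber := by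
  obtain ⟨d, hd⟩ := G.exists_forall_chromaticNumber_induce_fiber_le (G.dist x)
  exact ⟨d, chromaticNumber_le_two_mul_of_layers (fun _ _ huv => huv.dist_le_dist_add_one x) hd⟩

/-- For a connected graph `G` and vertex `x`, some distance layer `S_d(x)` satisfies
`χ(G[S_d(x)]) ≥ χ(G) / 2`, i.e. `2 · χ(G[S_d(x)]) ≥ χ(G)`. -/
theorem exists_layer_large_chromaticNumber {V : Type} [Fintype V] [Nonempty V]
    (G : SimpleGraph V) (hG : G.Connected) (x : V) :
    ∃ d : ℕ, G.chromaticNumber ≤ 2 * (G.induce {y : V | G.dist x y = d}).chromaticNumber :=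
  exists_layer_large_chromaticNumber_general G x
end

section
/- For every k ≥ 2, if a graph G has chromatic number at least 2^k, then G has the complete graph K_k as a minor. -/
open SimpleGraph

/-! Grow a breadth-first search from a vertex `c` of a component that is not
`(2 ^ (k + 1) - 1)`-colourable. Spheres of the same parity around `c` are not joined by edges, so
if every sphere of positive radius were `(2 ^ k - 1)`-colourable, two palettes plus one colour for
`c` would colour the component. Hence some sphere of radius `n + 1` is not `(2 ^ k - 1)`-colourable
and, by induction, contains a `K_k` minor; the ball of radius `n + 1` is connected, disjoint from
that sphere and adjacent to each of its vertices, so it serves as the branch set of a new vertex. -/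

namespace SimpleGraph

variable {V : Type} {G : SimpleGraph V} {u v c : V}

def sphere (G : SimpleGraph V) (c : V) (n : ℕ) : Set V := {v | G.edist v c = n}

theorem edist_le_edist_add_one_of_adj (h : G.Adj u v) (c : V) :
    G.edist u c ≤ G.edist v c + 1 := by
  calc G.edist u c ≤ G.edist u v + G.edist v c := G.edist_triangle
    _ = G.edist v c + 1 := by rw [edist_eq_one_iff_adj.mpr h, add_comm]

theorem exists_adj_edist_eq_of_edist_eq_add_one {n : ℕ} (h : G.edist u c = n + 1) :
    ∃ w, G.Adj u w ∧ G.edist w c = n := by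
  obtain ⟨p, hp⟩ := exists_walk_of_edist_eq_coe (h.trans (by norm_cast))
  cases p with
  | nil => simp at hp
  | cons hadj q =>
    refine ⟨_, hadj, le_antisymm ?_ ?_⟩
    · exact (edist_le q).trans (by simp_all)
    · have := edist_le_edist_add_one_of_adj hadj c
      rw [h] at this
      exact (ENat.add_le_add_iff_right ENat.one_ne_top).mp this

theorem induce_ball_connected {r : ℕ∞} (hr : 0 < r) : (G.induce (G.ball c r)).Connected := by
  have hc : c ∈ G.ball c r := mem_ball_self hr
  suffices ∀ (n : ℕ) (u : V) (hu : u ∈ G.ball c r), G.edist u c = n →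
      (G.induce (G.ball c r)).Reachable ⟨u, hu⟩ ⟨c, hc⟩ by
    rw [connected_iff_exists_forall_reachable]
    exact ⟨⟨c, hc⟩, fun ⟨u, hu⟩ =>
      (this _ u hu (ENat.natCast_toNat (lt_top_of_lt hu).ne).symm).symm⟩
  intro n
  induction n with
  | zero =>
    intro u hu h
    obtain rfl := edist_eq_zero_iff.mp h
    rfl
  | succ n ih =>
    intro u hu h
    obtain ⟨w, huw, hw⟩ := exists_adj_edist_eq_of_edist_eq_add_one (h.trans (by norm_cast))
    have hwr : w ∈ G.ball c r := by
      rw [mem_ball, hw]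
      exact lt_of_lt_of_le (by rw [h]; norm_cast; omega) hu.le
    exact (Adj.reachable (G := G.induce _) (u := ⟨u, hu⟩) (v := ⟨w, hwr⟩) huw).trans
      (ih w hwr hw)

theorem Reachable.mem_sphere_dist (h : G.Reachable u c) : u ∈ G.sphere c (G.dist u c) :=
  h.coe_dist_eq_edist.symm

theorem colorable_induce_ball_top_of_forall_sphere {m : ℕ}
    (h : ∀ n, 0 < n → (G.induce (G.sphere c n)).Colorable m) :
    (G.induce (G.ball c ⊤)).Colorable (2 * m + 1) := by
  classical
  choose C hC using fun n (hn : 0 < n) =>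
    (colorable_iff_exists_bdd_nat_coloring m).mp (h n hn)
  let F (n : ℕ) (u : V) : ℕ :=
    if hu : 0 < n ∧ u ∈ G.sphere c n then C n hu.1 ⟨u, hu.2⟩ else 0
  have hmem : ∀ u, G.Reachable u c → u ≠ c →
      0 < G.dist u c ∧ u ∈ G.sphere c (G.dist u c) :=
    fun u hu hne => ⟨hu.pos_dist_of_ne hne, hu.mem_sphere_dist⟩
  have hF_lt : ∀ u, G.Reachable u c → u ≠ c → F (G.dist u c) u < m := fun u hu hne => by
    simp only [F, dif_pos (hmem u hu hne)]
    exact hC _ _ _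
  -- Adjacent vertices lie in the same sphere or in consecutive ones, so the parity of the
  -- radius separates the spheres; the centre gets the extra colour `2 * m`.
  refine (colorable_iff_exists_bdd_nat_coloring _).mpr ⟨Coloring.mk
    (fun x => if x.1 = c then 2 * m else 2 * F (G.dist x.1 c) x.1 + G.dist x.1 c % 2) ?_, ?_⟩
  · rintro ⟨a, ha⟩ ⟨b, hb⟩ (hab : G.Adj a b) heq
    replace ha := mem_ball_top.mp ha
    replace hb := mem_ball_top.mp hb
    have hdist := hab.diff_dist_adj (u := c)
    rw [dist_comm (u := c), dist_comm (u := c)] at hdist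
    dsimp only at heq
    split_ifs at heq with hac hbc hbc
    · exact hab.ne (hac.trans hbc.symm)
    · have := hF_lt b hb hbc
      omega
    · have := hF_lt a ha hac
      omega
    · have hde : G.dist a c = G.dist b c := by omega
      have hFab : F (G.dist a c) a = F (G.dist a c) b := by rw [hde] at heq ⊢; omega
      have ha' := hmem a ha hac
      have hb' := hmem b hb hbc
      rw [← hde] at hb'
      simp only [F, dif_pos ha', dif_pos hb'] at hFab
      exact (C _ ha'.1).valid (v := ⟨a, ha'.2⟩) (w := ⟨b, hb'.2⟩) hab hFab
  · rintro ⟨u, hu⟩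
    change (if u = c then 2 * m else 2 * F (G.dist u c) u + G.dist u c % 2) < 2 * m + 1
    split_ifs with huc
    · omega
    · have := hF_lt u (mem_ball_top.mp hu) huc
      omega

theorem exists_not_colorable_induce_sphere {m : ℕ} (h : ¬G.Colorable (2 * m + 1)) :
    ∃ c, ∃ n, 0 < n ∧ ¬(G.induce (G.sphere c n)).Colorable m := by
  obtain ⟨C, hC⟩ := not_forall.mp (mt colorable_iff_forall_connectedComponent.mpr h)
  induction C using ConnectedComponent.ind with | h c => ?_
  refine ⟨c, ?_⟩
  by_contra! hsph
  apply hC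
  have := colorable_induce_ball_top_of_forall_sphere hsph
  rwa [ball_top] at this

theorem induce_image_val_connected {s : Set V} {t : Set s}
    (h : ((G.induce s).induce t).Connected) :
    (G.induce (Subtype.val '' t)).Connected :=
  h.map ⟨fun x => ⟨x.1.1, x.1, x.2, rfl⟩, id⟩
    (by rintro ⟨_, x, hx, rfl⟩; exact ⟨⟨x, hx⟩, rfl⟩)

end SimpleGraph

theorem IsMinor.top_succ_of_induce {V : Type} {G : SimpleGraph V} {k : ℕ} {B L : Set V}
    (hL : IsMinor (⊤ : SimpleGraph (Fin k)) (G.induce L)) (hB : (G.induce B).Connected)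
    (hBL : Disjoint B L) (hadj : ∀ u ∈ L, ∃ w ∈ B, G.Adj w u) :
    IsMinor (⊤ : SimpleGraph (Fin (k + 1))) G := by
  obtain ⟨f, hne, hdisj, hconn, hadjf⟩ := hL
  have hsub : ∀ j, Subtype.val '' f j ⊆ L := fun j => by rintro _ ⟨x, -, rfl⟩; exact x.2
  have hBf : ∀ j, ∃ w ∈ B, ∃ u ∈ Subtype.val '' f j, G.Adj w u := fun j => by
    obtain ⟨u, hu⟩ := hne j
    obtain ⟨w, hw, hwu⟩ := hadj u u.2
    exact ⟨w, hw, u, ⟨u, hu, rfl⟩, hwu⟩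
  refine ⟨Fin.cons B fun j => Subtype.val '' f j,
    Fin.cases (Set.nonempty_coe_sort.mp hB.nonempty) fun j => (hne j).image _, ?_,
    Fin.cases hB fun j => induce_image_val_connected (hconn j), ?_⟩
  · intro i j hij
    cases i using Fin.cases <;> cases j using Fin.cases
    · exact absurd rfl hij
    · exact hBL.mono_right (hsub _)
    · exact (hBL.mono_right (hsub _)).symm
    · exact (Set.disjoint_image_iff Subtype.val_injective).mpr (hdisj (ne_of_apply_ne _ hij))
  · intro i j hij
    cases i using Fin.cases <;> cases j using Fin.cases
    · exact absurd rfl hij.ne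
    · exact hBf _
    · obtain ⟨w, hw, u, hu, hwu⟩ := hBf _
      exact ⟨u, hu, w, hw, hwu.symm⟩
    · obtain ⟨u, hu, w, hw, huw⟩ := hadjf _ _ ((top_adj _ _).mpr (ne_of_apply_ne _ hij.ne))
      exact ⟨u, ⟨u, hu, rfl⟩, w, ⟨w, hw, rfl⟩, huw⟩

theorem isMinor_top_of_not_colorable {k : ℕ} :
    ∀ {V : Type} {G : SimpleGraph V}, ¬G.Colorable (2 ^ k - 1) →
      IsMinor (⊤ : SimpleGraph (Fin k)) G := by
  induction k with
  | zero => exact fun _ => ⟨Fin.elim0, Fin.rec0, Fin.rec0, Fin.rec0, Fin.rec0⟩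
  | succ k ih =>
    intro V G h
    have hcol : 2 * (2 ^ k - 1) + 1 = 2 ^ (k + 1) - 1 := by
      have := k.one_le_two_pow
      rw [pow_succ]
      omega
    obtain ⟨c, n, hn, hsph⟩ := exists_not_colorable_induce_sphere (hcol ▸ h)
    obtain ⟨n, rfl⟩ := Nat.exists_eq_add_one.mpr hn
    refine (ih hsph).top_succ_of_induce (induce_ball_connected (c := c) (r := (n + 1 : ℕ))
      (by exact_mod_cast n.succ_pos)) (Set.disjoint_left.mpr fun u hu hu' => hu.ne hu') ?_
    intro u hu
    obtain ⟨w, huw, hw⟩ := exists_adj_edist_eq_of_edist_eq_add_one (hu.trans (by norm_cast))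
    exact ⟨w, by rw [mem_ball, hw]; exact_mod_cast n.lt_succ_self, huw.symm⟩

theorem kk_minor_of_chromaticNumber_ge_two_pow_general {k : ℕ}
    {V : Type} (G : SimpleGraph V)
    (h : (2 ^ k : ℕ∞) ≤ G.chromaticNumber) :
    IsMinor (⊤ : SimpleGraph (Fin k)) G := by
  refine isMinor_top_of_not_colorable fun hc => ?_
  have hle : 2 ^ k ≤ 2 ^ k - 1 := by exact_mod_cast h.trans hc.chromaticNumber_le
  have := k.one_le_two_pow
  omega

/-- For every `k ≥ 2`, if `χ(G) ≥ 2 ^ k`, then `G` has `K_k` as a minor. -/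
theorem kk_minor_of_chromaticNumber_ge_two_pow {k : ℕ} (hk : 2 ≤ k)
    {V : Type} [Fintype V] [Nonempty V] (G : SimpleGraph V)
    (h : (2 ^ k : ℕ∞) ≤ G.chromaticNumber) :
    IsMinor (⊤ : SimpleGraph (Fin k)) G :=
  kk_minor_of_chromaticNumber_ge_two_pow_general G h
end
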